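/- arXiv:2510.21113 — 7 statements merged into one kernel-verified Lean document; each statement's English description precedes it below -/
import Mathlib

section
/- Let (Ω, 𝒜, P) be a probability space, X : Ω → ℝ^m a random vector, Y : Ω → ℝ a square-integrable random variable, and let ε : Ω → ℝ^m be independent of the pair (X, Y), with independent components ε_i distributed as the Gaussian N(0, α_i) for α ∈ ℝ^m with α_i > 0 for all i; set S = X + ε and μ(X) := E[Y | σ(X)]. Then E[(Y − E[Y | σ(S)])²] = E[Var(Y | σ(X))] + E[μ(X)²] − E[(E[μ(X) | σ(S)])²]. -/
open MeasureTheory ProbabilityTheory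

lemma memℒp_two_condexp {Ω : Type*} {m : MeasurableSpace Ω} [mΩ : MeasurableSpace Ω]
    {P : Measure Ω} [IsFiniteMeasure P] (hm : m ≤ mΩ) {Y : Ω → ℝ}
    (hY2 : MemLp Y 2 P) : MemLp (P[Y|m]) 2 P := by
  set f : Lp ℝ 2 P := hY2.toLp Y with hf
  have hcond : ((condExpL2 ℝ ℝ hm f : lpMeas ℝ ℝ m 2 P) : Ω → ℝ) =ᵐ[P] P[Y|m] := by
    refine ae_eq_condExp_of_forall_setIntegral_eq hm (hY2.integrable one_le_two)
      (fun s _ _ => (integrable_condExpL2_of_isFiniteMeasure hm).integrableOn)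
      (fun s hs hμs => ?_) (aestronglyMeasurable_condExpL2 hm f)
    rw [integral_condExpL2_eq hm f hs hμs.ne]
    exact setIntegral_congr_ae (hm s hs) ((hY2.coeFn_toLp).mono fun x hx _ => hx)
  exact (Lp.memLp _).ae_eq hcond

lemma condexp_pythagoras {Ω : Type*} {m : MeasurableSpace Ω} [mΩ : MeasurableSpace Ω]
    {P : Measure Ω} [IsProbabilityMeasure P] (hm : m ≤ mΩ) {Y : Ω → ℝ}
    (hY2 : MemLp Y 2 P) :
    ∫ ω, (Y ω - (P[Y|m]) ω) ^ 2 ∂P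
      = (∫ ω, (Y ω) ^ 2 ∂P) - ∫ ω, ((P[Y|m]) ω) ^ 2 ∂P := by
  have hg2 : MemLp (P[Y|m]) 2 P := memℒp_two_condexp hm hY2
  have hY1 : Integrable Y P := hY2.integrable one_le_two
  have hgY : Integrable ((P[Y|m]) * Y) P := by
    have h := hY2.smul (φ := P[Y|m]) hg2 (r := 1)
    rw [memLp_one_iff_integrable] at h
    exact h
  have h_pull : P[(P[Y|m]) * Y|m] =ᵐ[P] (P[Y|m]) * P[Y|m] :=
    condExp_mul_of_stronglyMeasurable_left stronglyMeasurable_condExp hgY hY1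
  have h_int : ∫ ω, (P[Y|m]) ω * Y ω ∂P = ∫ ω, ((P[Y|m]) ω) ^ 2 ∂P := by
    calc ∫ ω, (P[Y|m]) ω * Y ω ∂P = ∫ ω, (P[((P[Y|m]) * Y)|m]) ω ∂P :=
          (integral_condExp hm).symm
      _ = ∫ ω, ((P[Y|m]) * P[Y|m]) ω ∂P := integral_congr_ae h_pull
      _ = ∫ ω, ((P[Y|m]) ω) ^ 2 ∂P := by
          refine integral_congr_ae (Filter.Eventually.of_forall fun ω => ?_)
          simp [sq]
  have hYsq : Integrable (fun ω => (Y ω) ^ 2) P := hY2.integrable_sq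
  have hgsq : Integrable (fun ω => ((P[Y|m]) ω) ^ 2) P := hg2.integrable_sq
  have hgY' : Integrable (fun ω => (P[Y|m]) ω * Y ω) P := hgY
  calc ∫ ω, (Y ω - (P[Y|m]) ω) ^ 2 ∂P
      = ∫ ω, ((Y ω) ^ 2 - (2 * ((P[Y|m]) ω * Y ω) - ((P[Y|m]) ω) ^ 2)) ∂P := by
        refine integral_congr_ae (Filter.Eventually.of_forall fun ω => ?_); ring
    _ = (∫ ω, (Y ω) ^ 2 ∂P) - ∫ ω, (2 * ((P[Y|m]) ω * Y ω) - ((P[Y|m]) ω) ^ 2) ∂P :=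
        integral_sub hYsq ((hgY'.const_mul 2).sub hgsq)
    _ = (∫ ω, (Y ω) ^ 2 ∂P) - (2 * (∫ ω, (P[Y|m]) ω * Y ω ∂P) - ∫ ω, ((P[Y|m]) ω) ^ 2 ∂P) := by
        rw [integral_sub (hgY'.const_mul 2) hgsq, integral_const_mul]
    _ = (∫ ω, (Y ω) ^ 2 ∂P) - ∫ ω, ((P[Y|m]) ω) ^ 2 ∂P := by rw [h_int]; ring

lemma condexp_sup_indep {Ω : Type*} {m₁ m₂ mZ : MeasurableSpace Ω} [mΩ : MeasurableSpace Ω]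
    {P : Measure Ω} [IsProbabilityMeasure P] {Y : Ω → ℝ}
    (hm₁Z : m₁ ≤ mZ) (hmZ : mZ ≤ mΩ) (hm₂ : m₂ ≤ mΩ)
    (hIndep : Indep mZ m₂ P) (hY1 : Integrable Y P)
    (hYmZ : StronglyMeasurable[mZ] Y) :
    P[Y|m₁] =ᵐ[P] P[Y|m₁ ⊔ m₂] := by
  have hm₁ : m₁ ≤ mΩ := hm₁Z.trans hmZ
  have hm : m₁ ⊔ m₂ ≤ mΩ := sup_le hm₁ hm₂
  have hsetInt : ∀ f : Ω → ℝ, Integrable f P → StronglyMeasurable[mZ] f →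
      ∀ C : Set Ω, MeasurableSet[m₂] C →
      ∫ ω in C, f ω ∂P = (P C).toReal * ∫ ω, f ω ∂P := by
    intro f hf_int hf_meas C hC
    have h := condExp_indep_eq hmZ hm₂ hf_meas hIndep
    calc ∫ ω in C, f ω ∂P = ∫ ω in C, (P[f|m₂]) ω ∂P :=
          (setIntegral_condExp hm₂ hf_int hC).symm
      _ = ∫ _ω in C, (∫ x, f x ∂P) ∂P :=
          setIntegral_congr_ae (hm₂ C hC) (h.mono fun x hx _ => hx)
      _ = (P C).toReal * ∫ x, f x ∂P := by rw [setIntegral_const, smul_eq_mul]; rfl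
  have hcond_int : Integrable (P[Y|m₁]) P := integrable_condExp
  have hcond_meas : StronglyMeasurable[m₁] (P[Y|m₁]) := stronglyMeasurable_condExp
  set π : Set (Set Ω) :=
    {s | ∃ t₁, MeasurableSet[m₁] t₁ ∧ ∃ t₂, MeasurableSet[m₂] t₂ ∧ s = t₁ ∩ t₂} with hπ
  have h_gen : m₁ ⊔ m₂ = MeasurableSpace.generateFrom π := by
    refine le_antisymm (sup_le ?_ ?_) (MeasurableSpace.generateFrom_le ?_)
    · intro t ht
      exact MeasurableSpace.measurableSet_generateFrom
        ⟨t, ht, Set.univ, MeasurableSet.univ, (Set.inter_univ t).symm⟩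
    · intro t ht
      exact MeasurableSpace.measurableSet_generateFrom
        ⟨Set.univ, MeasurableSet.univ, t, ht, (Set.univ_inter t).symm⟩
    · rintro t ⟨t₁, h₁, t₂, h₂, rfl⟩
      exact MeasurableSet.inter ((le_sup_left : m₁ ≤ m₁ ⊔ m₂) _ h₁)
        ((le_sup_right : m₂ ≤ m₁ ⊔ m₂) _ h₂)
  have h_pi : IsPiSystem π := by
    rintro s ⟨s₁, hs₁, s₂, hs₂, rfl⟩ t ⟨t₁, ht₁, t₂, ht₂, rfl⟩ -
    exact ⟨s₁ ∩ t₁, hs₁.inter ht₁, s₂ ∩ t₂, hs₂.inter ht₂, by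
      rw [Set.inter_inter_inter_comm]⟩
  have hC : ∀ s, MeasurableSet[m₁ ⊔ m₂] s →
      ∫ ω in s, (P[Y|m₁]) ω ∂P = ∫ ω in s, Y ω ∂P := by
    intro s hs
    refine MeasurableSpace.induction_on_inter (m := m₁ ⊔ m₂)
      (C := fun s _ => ∫ ω in s, (P[Y|m₁]) ω ∂P = ∫ ω in s, Y ω ∂P) h_gen h_pi ?_ ?_ ?_ ?_ s hs
    · simp
    · rintro t ⟨t₁, h₁, t₂, h₂, rfl⟩
      have hIY : ∫ ω in t₁ ∩ t₂, Y ω ∂P = (P t₂).toReal * ∫ ω in t₁, Y ω ∂P := by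
        rw [Set.inter_comm, ← setIntegral_indicator (hm₁ _ h₁)]
        rw [hsetInt (t₁.indicator Y) (hY1.indicator (hm₁ _ h₁))
          (hYmZ.indicator (hm₁Z _ h₁)) t₂ h₂, integral_indicator (hm₁ _ h₁)]
      have hIμ : ∫ ω in t₁ ∩ t₂, (P[Y|m₁]) ω ∂P
          = (P t₂).toReal * ∫ ω in t₁, (P[Y|m₁]) ω ∂P := by
        rw [Set.inter_comm, ← setIntegral_indicator (hm₁ _ h₁)]
        rw [hsetInt (t₁.indicator (P[Y|m₁])) (hcond_int.indicator (hm₁ _ h₁))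
          ((hcond_meas.mono hm₁Z).indicator (hm₁Z _ h₁)) t₂ h₂,
          integral_indicator (hm₁ _ h₁)]
      rw [hIY, hIμ, setIntegral_condExp hm₁ hY1 h₁]
    · intro t htm ht
      have htΩ : MeasurableSet t := hm _ htm
      have h1 := integral_add_compl htΩ hcond_int
      have h2 := integral_add_compl htΩ hY1
      have h3 : ∫ ω, (P[Y|m₁]) ω ∂P = ∫ ω, Y ω ∂P := integral_condExp hm₁
      linarith
    · intro f hdisj hmeas hind
      have hfΩ : ∀ i, MeasurableSet (f i) := fun i => hm _ (hmeas i)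
      rw [integral_iUnion hfΩ hdisj hY1.integrableOn,
        integral_iUnion hfΩ hdisj hcond_int.integrableOn]
      exact tsum_congr hind
  exact ae_eq_condExp_of_forall_setIntegral_eq hm hY1
    (fun s _ _ => hcond_int.integrableOn)
    (fun s hs _ => hC s hs)
    ((hcond_meas.mono (le_sup_left : m₁ ≤ m₁ ⊔ m₂)).aestronglyMeasurable (μ := P))

/-- population-level objective identity, Theorem 1:
if `S = X + ε` with `ε` independent of `(X, Y)` and independent Gaussian
components `ε i ~ N(0, α i)`, then the Bayes risk of predicting `Y` from `S`
decomposes as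
`E[(Y − E[Y|σ(S)])²] = E[Var(Y|σ(X))] + E[μ(X)²] − E[(E[μ(X)|σ(S)])²]`. -/
theorem population_level_objective
    {Ω : Type*} [MeasurableSpace Ω] {P : Measure Ω} [IsProbabilityMeasure P]
    {m : ℕ} (X : Ω → Fin m → ℝ) (Y : Ω → ℝ) (ε : Ω → Fin m → ℝ)
    (hX : Measurable X) (hY : Measurable Y) (hε : Measurable ε)
    (hY2 : MemLp Y 2 P)
    (α : Fin m → ℝ) (hα : ∀ i, 0 < α i)
    (hindep : IndepFun ε (fun ω => (X ω, Y ω)) P)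
    (hcomp : iIndepFun (fun i ω => ε ω i) P)
    (hgauss : ∀ i, Measure.map (fun ω => ε ω i) P = gaussianReal 0 ⟨α i, (hα i).le⟩)
    (S : Ω → Fin m → ℝ) (hS : S = fun ω => X ω + ε ω)
    (μX : Ω → ℝ) (hμX : μX = P[Y | MeasurableSpace.comap X inferInstance]) :
    ∫ ω, (Y ω - (P[Y | MeasurableSpace.comap S inferInstance]) ω) ^ 2 ∂P
      = (∫ ω, ((P[fun ω' => (Y ω') ^ 2 | MeasurableSpace.comap X inferInstance]) ω
            - ((P[Y | MeasurableSpace.comap X inferInstance]) ω) ^ 2) ∂P)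
        + (∫ ω, (μX ω) ^ 2 ∂P)
        - ∫ ω, ((P[μX | MeasurableSpace.comap S inferInstance]) ω) ^ 2 ∂P := by
  subst hμX
  have hY1 : Integrable Y P := hY2.integrable one_le_two
  -- σ-algebra inequalities
  have hm₁ : MeasurableSpace.comap X inferInstance ≤ ‹MeasurableSpace Ω› := hX.comap_le
  have hm₂ : MeasurableSpace.comap ε inferInstance ≤ ‹MeasurableSpace Ω› := hε.comap_le
  have hmZ : MeasurableSpace.comap (fun ω => (X ω, Y ω)) inferInstance
      ≤ ‹MeasurableSpace Ω› := (hX.prodMk hY).comap_le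
  have hm₁Z : MeasurableSpace.comap X inferInstance
      ≤ MeasurableSpace.comap (fun ω => (X ω, Y ω)) inferInstance := by
    have h1 : (MeasurableSpace.comap X inferInstance : MeasurableSpace Ω)
        = MeasurableSpace.comap (fun ω => (X ω, Y ω))
            (MeasurableSpace.comap Prod.fst inferInstance) := by
      rw [MeasurableSpace.comap_comp]; rfl
    rw [h1]
    exact MeasurableSpace.comap_mono measurable_fst.comap_le
  have hYmZ : StronglyMeasurable[MeasurableSpace.comap (fun ω => (X ω, Y ω)) inferInstance] Y :=
    (measurable_snd.comp (comap_measurable (fun ω => (X ω, Y ω)))).stronglyMeasurable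
  have hIndep : Indep (MeasurableSpace.comap (fun ω => (X ω, Y ω)) inferInstance)
      (MeasurableSpace.comap ε inferInstance) P :=
    ((IndepFun_iff_Indep ε (fun ω => (X ω, Y ω)) P).mp hindep).symm
  -- the tower property
  have hkey : P[Y|MeasurableSpace.comap X inferInstance]
      =ᵐ[P] P[Y|MeasurableSpace.comap X inferInstance ⊔ MeasurableSpace.comap ε inferInstance] :=
    condexp_sup_indep hm₁Z hmZ hm₂ hIndep hY1 hYmZ
  have hmS_le : MeasurableSpace.comap S inferInstance
      ≤ MeasurableSpace.comap X inferInstance ⊔ MeasurableSpace.comap ε inferInstance := by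
    refine Measurable.comap_le ?_
    rw [hS]
    exact Measurable.add
      ((comap_measurable X).mono le_sup_left le_rfl)
      ((comap_measurable ε).mono le_sup_right le_rfl)
  have hmS : MeasurableSpace.comap S inferInstance ≤ ‹MeasurableSpace Ω› :=
    hmS_le.trans (sup_le hm₁ hm₂)
  -- E[Y | σ(S)] = E[μ(X) | σ(S)]
  have h2 : P[P[Y|MeasurableSpace.comap X inferInstance]|MeasurableSpace.comap S inferInstance]
      =ᵐ[P] P[Y|MeasurableSpace.comap S inferInstance] := by
    calc P[P[Y|MeasurableSpace.comap X inferInstance]|MeasurableSpace.comap S inferInstance]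
        =ᵐ[P] P[P[Y|MeasurableSpace.comap X inferInstance
              ⊔ MeasurableSpace.comap ε inferInstance]|MeasurableSpace.comap S inferInstance] :=
          condExp_congr_ae hkey
      _ =ᵐ[P] P[Y|MeasurableSpace.comap S inferInstance] :=
          condExp_condExp_of_le hmS_le (sup_le hm₁ hm₂)
  -- integrals of squares of the two versions agree
  have h3 : ∫ ω, ((P[P[Y|MeasurableSpace.comap X inferInstance]|
        MeasurableSpace.comap S inferInstance]) ω) ^ 2 ∂P
      = ∫ ω, ((P[Y|MeasurableSpace.comap S inferInstance]) ω) ^ 2 ∂P :=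
    integral_congr_ae (h2.mono fun ω hω => by dsimp only; rw [hω])
  -- Pythagoras
  have hPyth := condexp_pythagoras hmS hY2
  -- first term on the RHS
  have hterm1 : ∫ ω, ((P[fun ω' => (Y ω') ^ 2|MeasurableSpace.comap X inferInstance]) ω
        - ((P[Y|MeasurableSpace.comap X inferInstance]) ω) ^ 2) ∂P
      = (∫ ω, (Y ω) ^ 2 ∂P)
        - ∫ ω, ((P[Y|MeasurableSpace.comap X inferInstance]) ω) ^ 2 ∂P := by
    rw [integral_sub integrable_condExp (memℒp_two_condexp hm₁ hY2).integrable_sq]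
    rw [integral_condExp hm₁]
  rw [hPyth, hterm1, h3]
  ring
end

section
/- Let (Ω, 𝒜, P) be a probability space, X, ε : Ω → ℝ^m random vectors and Y : Ω → ℝ a random variable such that ε is independent of the pair (X, Y). Set S = X + ε. Then Y and S are conditionally independent given the σ-algebra σ(X) generated by X. -/
open MeasureTheory ProbabilityTheory

/-- Conditional independence of two random variables `Y` and `S` given a
σ-algebra `m`: for all bounded measurable `f`, `g`,
`E[f(Y) g(S) | m] = E[f(Y) | m] ⋅ E[g(S) | m]` almost surely. -/
def CondIndepFunGiven {Ω : Type*} [MeasurableSpace Ω] (P : Measure Ω)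
    (m : MeasurableSpace Ω) {β γ : Type*} [MeasurableSpace β] [MeasurableSpace γ]
    (Y : Ω → β) (S : Ω → γ) : Prop :=
  ∀ (f : β → ℝ) (g : γ → ℝ), Measurable f → Measurable g →
    (∃ C, ∀ x, |f x| ≤ C) → (∃ C, ∀ x, |g x| ≤ C) →
    P[fun ω => f (Y ω) * g (S ω) | m] =ᵐ[P]
      fun ω => (P[fun ω' => f (Y ω') | m]) ω * (P[fun ω' => g (S ω') | m]) ω

lemma integrable_of_abs_le {Ω : Type*} [MeasurableSpace Ω] {P : Measure Ω}
    [IsFiniteMeasure P] {u : Ω → ℝ} (hu : AEStronglyMeasurable u P) {C : ℝ}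
    (hC : ∀ x, |u x| ≤ C) : Integrable u P :=
  ⟨hu, HasFiniteIntegral.of_bounded (C := C) (Filter.Eventually.of_forall fun x => by
    rw [Real.norm_eq_abs]; exact hC x)⟩

/-- if `ε` is independent of the pair `(X, Y)` and
`S = X + ε`, then `Y` and `S` are conditionally independent given `σ(X)`. -/
theorem condIndep_of_add_indep_noise
    {Ω : Type*} [MeasurableSpace Ω] {P : Measure Ω} [IsProbabilityMeasure P]
    {m : ℕ} (X ε : Ω → Fin m → ℝ) (Y : Ω → ℝ)
    (hX : Measurable X) (hY : Measurable Y) (hε : Measurable ε)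
    (hindep : IndepFun ε (fun ω => (X ω, Y ω)) P)
    (S : Ω → Fin m → ℝ) (hS : S = fun ω => X ω + ε ω) :
    CondIndepFunGiven P (MeasurableSpace.comap X inferInstance) Y S := by
  intro f g hf hg hfb hgb
  obtain ⟨Cf, hCf⟩ := hfb
  obtain ⟨Cg, hCg⟩ := hgb
  subst hS
  have hmX : MeasurableSpace.comap X inferInstance ≤ (by infer_instance : MeasurableSpace Ω) :=
    hX.comap_le
  have hXmX : Measurable[MeasurableSpace.comap X inferInstance] X :=
    Measurable.of_comap_le le_rfl
  set μe := P.map ε with hμe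
  set μXY := P.map (fun ω => (X ω, Y ω)) with hμXY
  have hXYm : Measurable (fun ω => (X ω, Y ω)) := hX.prodMk hY
  haveI : IsProbabilityMeasure μe := Measure.isProbabilityMeasure_map hε.aemeasurable
  haveI : IsProbabilityMeasure μXY := Measure.isProbabilityMeasure_map hXYm.aemeasurable
  set h : (Fin m → ℝ) → ℝ := fun x => ∫ e, g (x + e) ∂μe with hh
  have hhm : StronglyMeasurable h := by
    apply StronglyMeasurable.integral_prod_right'
      (f := fun p : (Fin m → ℝ) × (Fin m → ℝ) => g (p.1 + p.2))
    exact (hg.comp (measurable_fst.add measurable_snd)).stronglyMeasurable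
  have hhb : ∀ x, |h x| ≤ |Cg| := by
    intro x
    calc |h x| ≤ |Cg| * (μe Set.univ).toReal := by
          rw [← Real.norm_eq_abs (h x)]
          refine norm_integral_le_of_norm_le_const ?_
          filter_upwards with e
          rw [Real.norm_eq_abs]
          exact (hCg _).trans (le_abs_self _)
      _ = |Cg| := by simp
  -- product law
  have hprod : P.map (fun ω => ((X ω, Y ω), ε ω)) = μXY.prod μe := by
    rw [hμXY, hμe]
    exact (indepFun_iff_map_prod_eq_prod_map_map hXYm.aemeasurable hε.aemeasurable).mp hindep.symm
  -- key Fubini identity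
  have key : ∀ F : ((Fin m → ℝ) × ℝ) → ℝ, Measurable F → ∀ C : ℝ, (∀ p, |F p| ≤ C) →
      ∫ ω, F (X ω, Y ω) * g (X ω + ε ω) ∂P = ∫ ω, F (X ω, Y ω) * h (X ω) ∂P := by
    intro F hF C hC
    have hΦ : Measurable (fun q : ((Fin m → ℝ) × ℝ) × (Fin m → ℝ) => F q.1 * g (q.1.1 + q.2)) :=
      (hF.comp measurable_fst).mul
        (hg.comp ((measurable_fst.comp measurable_fst).add measurable_snd))
    have hint : Integrable (fun q : ((Fin m → ℝ) × ℝ) × (Fin m → ℝ) => F q.1 * g (q.1.1 + q.2))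
        (μXY.prod μe) := by
      refine integrable_of_abs_le hΦ.aestronglyMeasurable (C := |C| * |Cg|) fun q => ?_
      rw [abs_mul]
      exact mul_le_mul ((hC _).trans (le_abs_self _)) ((hCg _).trans (le_abs_self _))
        (abs_nonneg _) (abs_nonneg _)
    calc ∫ ω, F (X ω, Y ω) * g (X ω + ε ω) ∂P
        = ∫ q, F q.1 * g (q.1.1 + q.2) ∂(P.map (fun ω => ((X ω, Y ω), ε ω))) := by
          rw [integral_map (hXYm.prodMk hε).aemeasurable hΦ.aestronglyMeasurable]
      _ = ∫ q, F q.1 * g (q.1.1 + q.2) ∂(μXY.prod μe) := by rw [hprod]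
      _ = ∫ p, ∫ e, F p * g (p.1 + e) ∂μe ∂μXY := integral_prod _ hint
      _ = ∫ p, F p * h p.1 ∂μXY := by
          refine integral_congr_ae (Filter.Eventually.of_forall fun p => ?_)
          simp only [hh]
          exact integral_const_mul _ _
      _ = ∫ ω, F (X ω, Y ω) * h (X ω) ∂P := by
          rw [hμXY]
          exact integral_map (f := fun p : (Fin m → ℝ) × ℝ => F p * h p.1)
            hXYm.aemeasurable
            ((hF.mul (hhm.measurable.comp measurable_fst)).aestronglyMeasurable)
  -- integrability facts
  have hgS_int : Integrable (fun ω => g (X ω + ε ω)) P :=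
    integrable_of_abs_le (hg.comp (hX.add hε)).aestronglyMeasurable (fun ω => hCg (X ω + ε ω))
  have hfY_int : Integrable (fun ω => f (Y ω)) P :=
    integrable_of_abs_le (hf.comp hY).aestronglyMeasurable (fun ω => hCf (Y ω))
  have hhX_smX : StronglyMeasurable[MeasurableSpace.comap X inferInstance] (fun ω => h (X ω)) :=
    hhm.comp_measurable hXmX
  have hhX_int : Integrable (fun ω => h (X ω)) P :=
    integrable_of_abs_le ((hhm.measurable.comp hX)).aestronglyMeasurable (fun ω => hhb (X ω))
  have hfg_int : Integrable (fun ω => f (Y ω) * g (X ω + ε ω)) P := by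
    refine integrable_of_abs_le ((hf.comp hY).mul (hg.comp (hX.add hε))).aestronglyMeasurable
      (C := |Cf| * |Cg|) fun ω => ?_
    rw [abs_mul]
    exact mul_le_mul ((hCf _).trans (le_abs_self _)) ((hCg _).trans (le_abs_self _))
      (abs_nonneg _) (abs_nonneg _)
  have hhXfY_int : Integrable ((fun ω => h (X ω)) * fun ω => f (Y ω)) P := by
    refine integrable_of_abs_le
      (((hhm.measurable.comp hX).mul (hf.comp hY)).aestronglyMeasurable)
      (C := |Cg| * |Cf|) fun ω => ?_
    simp only [Pi.mul_apply, abs_mul]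
    exact mul_le_mul (hhb _) ((hCf _).trans (le_abs_self _)) (abs_nonneg _) (abs_nonneg _)
  -- set-integral identities over mX-measurable sets
  have hset : ∀ s : Set Ω, MeasurableSet[MeasurableSpace.comap X inferInstance] s →
      (∀ u : Ω → ℝ, ∫ ω in s, f (Y ω) * u ω ∂P =
        ∫ ω, (Set.indicator s (fun _ => (1:ℝ)) ω * f (Y ω)) * u ω ∂P) ∧
      (∀ u : Ω → ℝ, ∫ ω in s, u ω ∂P =
        ∫ ω, Set.indicator s (fun _ => (1:ℝ)) ω * u ω ∂P) := by
    intro s hs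
    have hs' : MeasurableSet s := hmX _ hs
    constructor
    · intro u
      rw [← integral_indicator hs']
      refine integral_congr_ae (Filter.Eventually.of_forall fun ω => ?_)
      by_cases hω : ω ∈ s <;> simp [hω]
    · intro u
      rw [← integral_indicator hs']
      refine integral_congr_ae (Filter.Eventually.of_forall fun ω => ?_)
      by_cases hω : ω ∈ s <;> simp [hω]
  -- E[g(S) | mX] = h ∘ X
  have hE_gS : P[fun ω => g (X ω + ε ω) | MeasurableSpace.comap X inferInstance] =ᵐ[P]
      fun ω => h (X ω) := by
    refine (ae_eq_condExp_of_forall_setIntegral_eq hmX hgS_int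
      (fun s _ _ => hhX_int.integrableOn) ?_
      hhX_smX.aestronglyMeasurable).symm
    intro s hs _
    obtain ⟨B, hB, rfl⟩ := hs
    have hsB : MeasurableSet[MeasurableSpace.comap X inferInstance] (X ⁻¹' B) := ⟨B, hB, rfl⟩
    obtain ⟨_, h2⟩ := hset _ hsB
    rw [h2 (fun ω => h (X ω)), h2 (fun ω => g (X ω + ε ω))]
    have hind : ∀ ω, Set.indicator (X ⁻¹' B) (fun _ => (1:ℝ)) ω =
        (fun p : (Fin m → ℝ) × ℝ => Set.indicator B (fun _ => (1:ℝ)) p.1) (X ω, Y ω) := by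
      intro ω
      by_cases hω : X ω ∈ B <;> simp [hω, Set.indicator_apply, Set.mem_preimage]
    simp only [hind]
    exact (key _ ((measurable_const.indicator hB).comp measurable_fst) 1 fun p => by
      by_cases hp : p.1 ∈ B <;> simp [hp, Set.indicator_apply]).symm
  -- pull-out property
  have hmul : P[(fun ω => h (X ω)) * (fun ω => f (Y ω)) | MeasurableSpace.comap X inferInstance]
      =ᵐ[P] (fun ω => h (X ω)) * P[fun ω => f (Y ω) | MeasurableSpace.comap X inferInstance] :=
    condExp_mul_of_stronglyMeasurable_left hhX_smX hhXfY_int hfY_int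
  -- E[f(Y) g(S) | mX] = (h ∘ X) * E[f(Y) | mX]
  have hE_prod : P[fun ω => f (Y ω) * g (X ω + ε ω) | MeasurableSpace.comap X inferInstance]
      =ᵐ[P] fun ω => h (X ω) *
        (P[fun ω' => f (Y ω') | MeasurableSpace.comap X inferInstance]) ω := by
    refine (ae_eq_condExp_of_forall_setIntegral_eq hmX hfg_int ?_ ?_ ?_).symm
    · intro s _ _
      refine Integrable.integrableOn ?_
      exact integrable_condExp.bdd_mul (hhm.measurable.comp hX).aestronglyMeasurable
        (c := |Cg|) (Filter.Eventually.of_forall fun ω => by rw [Real.norm_eq_abs]; exact hhb _)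
    · intro s hs _
      obtain ⟨B, hB, rfl⟩ := hs
      have hsB : MeasurableSet[MeasurableSpace.comap X inferInstance] (X ⁻¹' B) := ⟨B, hB, rfl⟩
      obtain ⟨h1, _⟩ := hset _ hsB
      -- ∫_s f(Y) g(S)  =  ∫_s f(Y) h(X)
      have step1 : ∫ ω in X ⁻¹' B, f (Y ω) * g (X ω + ε ω) ∂P =
          ∫ ω in X ⁻¹' B, f (Y ω) * h (X ω) ∂P := by
        rw [h1 (fun ω => g (X ω + ε ω)), h1 (fun ω => h (X ω))]
        have hind : ∀ ω, Set.indicator (X ⁻¹' B) (fun _ => (1:ℝ)) ω * f (Y ω) =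
            (fun p : (Fin m → ℝ) × ℝ =>
              Set.indicator B (fun _ => (1:ℝ)) p.1 * f p.2) (X ω, Y ω) := by
          intro ω
          by_cases hω : X ω ∈ B <;> simp [hω, Set.indicator_apply, Set.mem_preimage]
        simp only [hind]
        refine key _ (((measurable_const.indicator hB).comp measurable_fst).mul
          (hf.comp measurable_snd)) (1 * |Cf|) fun p => ?_
        rw [Pi.mul_apply, abs_mul]
        refine mul_le_mul ?_ ((hCf _).trans (le_abs_self _)) (abs_nonneg _) zero_le_one
        by_cases hp : p.1 ∈ B <;> simp [hp, Set.indicator_apply]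
      -- ∫_s h(X) E[f(Y)|mX]  =  ∫_s f(Y) h(X)
      have step2 : ∫ ω in X ⁻¹' B,
          h (X ω) * (P[fun ω' => f (Y ω') | MeasurableSpace.comap X inferInstance]) ω ∂P =
          ∫ ω in X ⁻¹' B, f (Y ω) * h (X ω) ∂P := by
        have e0 : ∫ ω in X ⁻¹' B,
            h (X ω) * (P[fun ω' => f (Y ω') | MeasurableSpace.comap X inferInstance]) ω ∂P =
            ∫ ω in X ⁻¹' B, (P[(fun ω => h (X ω)) * (fun ω => f (Y ω)) |
              MeasurableSpace.comap X inferInstance]) ω ∂P :=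
          setIntegral_congr_ae (hmX _ hsB) (hmul.mono fun ω hω _ => hω.symm)
        rw [e0, setIntegral_condExp hmX hhXfY_int hsB]
        refine setIntegral_congr_ae (hmX _ hsB)
          (Filter.Eventually.of_forall fun ω _ => ?_)
        simp [mul_comm]
      rw [step1, step2]
    · exact (hhX_smX.mul stronglyMeasurable_condExp).aestronglyMeasurable
  -- conclude
  refine hE_prod.trans ?_
  filter_upwards [hE_gS] with ω hω
  rw [hω, mul_comm]
end

section
/- Let (Ω, 𝒜, P) be a probability space, X, S : Ω → ℝ^m random vectors and Y : Ω → ℝ a square-integrable random variable such that Y and S are conditionally independent given the σ-algebra σ(X) generated by X. Writing μ(X) := E[Y | σ(X)], the expected conditional variances satisfy E[Var(Y | σ(S))] = E[Var(Y | σ(X))] + E[Var(μ(X) | σ(S))]. -/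
open MeasureTheory ProbabilityTheory

/-- Conditional variance `Var(Y | m) = E[Y² | m] − (E[Y | m])²`. -/
noncomputable def condVarGiven {Ω : Type*} [MeasurableSpace Ω] (P : Measure Ω)
    (m : MeasurableSpace Ω) (Y : Ω → ℝ) : Ω → ℝ :=
  fun ω => (P[fun ω' => (Y ω') ^ 2 | m]) ω - ((P[Y | m]) ω) ^ 2

/-- The conditional expectation of an `L²` function is in `L²`. -/
lemma memLp_two_condexp_aux {α : Type*} {m m0 : MeasurableSpace α} (hm : m ≤ m0)
    {μ : Measure α} [IsFiniteMeasure μ] {f : α → ℝ} (hf : MemLp f 2 μ) :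
    MemLp (μ[f|m]) 2 μ := by
  have h2 : (μ[f|m]) =ᵐ[μ] (condExpL2 ℝ ℝ hm (hf.toLp f) : α →₂[μ] ℝ) := by
    refine (ae_eq_condExp_of_forall_setIntegral_eq hm (hf.integrable one_le_two) ?_ ?_ ?_).symm
    · intro s _ _
      exact ((Lp.memLp _).integrable one_le_two).integrableOn
    · intro s hs hμs
      rw [integral_condExpL2_eq hm (hf.toLp f) hs hμs.ne]
      exact setIntegral_congr_ae (hm s hs) ((hf.coeFn_toLp).mono fun x hx _ => hx)
    · exact lpMeas.aestronglyMeasurable _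
  exact (Lp.memLp _).ae_eq h2.symm

/-- Integral of the conditional variance. -/
lemma integral_condVar_aux {α : Type*} {m m0 : MeasurableSpace α} (hm : m ≤ m0)
    {μ : Measure α} [IsProbabilityMeasure μ] {f : α → ℝ} (hf : MemLp f 2 μ) :
    ∫ x, condVarGiven μ m f x ∂μ
      = (∫ x, (f x) ^ 2 ∂μ) - ∫ x, ((μ[f|m]) x) ^ 2 ∂μ := by
  unfold condVarGiven
  rw [integral_sub integrable_condExp ((memLp_two_condexp_aux hm hf).integrable_sq),
    integral_condExp hm]

/-- if `Y` and `S` are conditionally independent given `σ(X)`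
and `μ(X) = E[Y | σ(X)]`, then
`E[Var(Y | σ(S))] = E[Var(Y | σ(X))] + E[Var(μ(X) | σ(S))]`. -/
theorem expected_conditional_variance_decomposition
    {Ω : Type*} [MeasurableSpace Ω] {P : Measure Ω} [IsProbabilityMeasure P]
    {m : ℕ} (X S : Ω → Fin m → ℝ) (Y : Ω → ℝ)
    (hX : Measurable X) (hS : Measurable S) (hY : Measurable Y)
    (hY2 : MemLp Y 2 P)
    (hci : CondIndepFunGiven P (MeasurableSpace.comap X inferInstance) Y S)
    (μX : Ω → ℝ) (hμX : μX = P[Y | MeasurableSpace.comap X inferInstance]) :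
    ∫ ω, condVarGiven P (MeasurableSpace.comap S inferInstance) Y ω ∂P
      = (∫ ω, condVarGiven P (MeasurableSpace.comap X inferInstance) Y ω ∂P)
        + ∫ ω, condVarGiven P (MeasurableSpace.comap S inferInstance) μX ω ∂P := by
  have hmX : MeasurableSpace.comap X (inferInstance : MeasurableSpace (Fin m → ℝ))
      ≤ (inferInstance : MeasurableSpace Ω) := hX.comap_le
  have hmS : MeasurableSpace.comap S (inferInstance : MeasurableSpace (Fin m → ℝ))
      ≤ (inferInstance : MeasurableSpace Ω) := hS.comap_le
  letI m0 : MeasurableSpace Ω := ‹_›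
  set mX := MeasurableSpace.comap X (inferInstance : MeasurableSpace (Fin m → ℝ)) with hmXdef
  set mS := MeasurableSpace.comap S (inferInstance : MeasurableSpace (Fin m → ℝ)) with hmSdef
  letI : MeasurableSpace Ω := m0
  have hYint : Integrable Y P := hY2.integrable one_le_two
  have hμX2 : MemLp μX 2 P := hμX ▸ memLp_two_condexp_aux hmX hY2
  have hμXint : Integrable μX P := hμX2.integrable one_le_two
  -- the truncations of Y
  set F : ℕ → ℝ → ℝ := fun n x => max (-(n : ℝ)) (min (n : ℝ) x) with hFdef
  have hFmeas : ∀ n, Measurable (F n) :=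
    fun n => measurable_const.max (measurable_const.min measurable_id)
  have hFbdd : ∀ n, ∀ x, |F n x| ≤ (n : ℝ) := by
    intro n x
    rw [abs_le]
    refine ⟨le_max_left _ _, max_le (neg_le_self (Nat.cast_nonneg n)) (min_le_left _ _)⟩
  have hFle : ∀ n x, |F n x| ≤ |x| := by
    intro n x
    rw [abs_le]
    constructor
    · exact le_max_of_le_right (le_min (le_trans (neg_nonpos_of_nonneg (abs_nonneg x))
        (Nat.cast_nonneg n)) (neg_abs_le x))
    · exact max_le (le_trans (neg_nonpos_of_nonneg (Nat.cast_nonneg n)) (abs_nonneg x))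
        (le_trans (min_le_right _ _) (le_abs_self x))
  have hFtendsto : ∀ x : ℝ, Filter.Tendsto (fun n => F n x) Filter.atTop (nhds x) := by
    intro x
    refine Filter.Tendsto.congr' ?_ tendsto_const_nhds
    filter_upwards [Filter.eventually_ge_atTop ⌈|x|⌉₊] with n hn
    have hxn : |x| ≤ (n : ℝ) := le_trans (Nat.le_ceil _) (Nat.cast_le.2 hn)
    have h1 : min (n : ℝ) x = x := min_eq_right (le_trans (le_abs_self x) hxn)
    have h2 : max (-(n : ℝ)) x = x := max_eq_right (le_trans (neg_le_neg hxn) (neg_abs_le x))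
    simp only [hFdef, h1, h2]
  -- truncations converge in L¹
  have hL1 : Filter.Tendsto (fun n => ∫ ω, |F n (Y ω) - Y ω| ∂P) Filter.atTop (nhds 0) := by
    have h0 : (0 : ℝ) = ∫ _ω, (0 : ℝ) ∂P := by simp
    rw [h0]
    refine tendsto_integral_of_dominated_convergence (fun ω => 2 * |Y ω|) ?_ ?_ ?_ ?_
    · intro n
      exact (((hFmeas n).comp hY).sub hY).abs.aestronglyMeasurable
    · exact hYint.abs.const_mul 2
    · intro n
      filter_upwards with ω
      rw [Real.norm_eq_abs, abs_abs, two_mul]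
      exact le_trans (abs_sub _ _) (add_le_add (hFle n (Y ω)) le_rfl)
    · filter_upwards with ω
      have h := ((hFtendsto (Y ω)).sub
        (tendsto_const_nhds : Filter.Tendsto (fun _ : ℕ => Y ω) Filter.atTop (nhds (Y ω)))).abs
      simpa using h
  -- key set-integral equality
  have hkey : ∀ s : Set Ω, MeasurableSet[mS] s → ∫ ω in s, μX ω ∂P = ∫ ω in s, Y ω ∂P := by
    intro s hs
    obtain ⟨B, hB, rfl⟩ := hs
    set g : (Fin m → ℝ) → ℝ := B.indicator (fun _ => (1 : ℝ)) with hgdef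
    have hgmeas : Measurable g := measurable_const.indicator hB
    have hgbdd : ∀ x, |g x| ≤ 1 := by
      intro x
      by_cases hx : x ∈ B <;> simp [hgdef, Set.indicator_apply, hx]
    have hgS : ∀ ω, g (S ω) = Set.indicator (S ⁻¹' B) (fun _ => (1 : ℝ)) ω := by
      intro ω
      by_cases hω : S ω ∈ B <;>
        simp [hgdef, Set.indicator_apply, hω, Set.mem_preimage]
    have hgSint : Integrable (fun ω => g (S ω)) P :=
      Integrable.mono' (integrable_const 1) (hgmeas.comp hS).aestronglyMeasurable
        (Filter.Eventually.of_forall fun ω => by rw [Real.norm_eq_abs]; exact hgbdd _)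
    -- indicator identity for integrals
    have hind : ∀ (f : Ω → ℝ), (fun ω => f ω * g (S ω)) = (S ⁻¹' B).indicator f := by
      intro f
      funext ω
      by_cases hω : ω ∈ S ⁻¹' B <;>
        simp [hgS ω, Set.indicator_apply, hω]
    have hSBmeas : MeasurableSet[m0] (S ⁻¹' B) := hS hB
    -- the two sequences of integrals
    have hEq : ∀ n, ∫ ω, F n (Y ω) * g (S ω) ∂P
        = ∫ ω, (P[fun ω' => F n (Y ω')|mX]) ω * (P[fun ω' => g (S ω')|mX]) ω ∂P := by
      intro n
      have hint : Integrable (fun ω => F n (Y ω) * g (S ω)) P := by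
        refine Integrable.mono' (integrable_const ((n : ℝ) * 1))
          (((hFmeas n).comp hY).mul (hgmeas.comp hS)).aestronglyMeasurable ?_
        filter_upwards with ω
        rw [Real.norm_eq_abs, abs_mul]
        exact mul_le_mul (hFbdd n _) (hgbdd _) (abs_nonneg _) (Nat.cast_nonneg n)
      rw [← integral_condExp hmX (f := fun ω => F n (Y ω) * g (S ω))]
      exact integral_congr_ae (hci (F n) g (hFmeas n) hgmeas ⟨n, hFbdd n⟩ ⟨1, hgbdd⟩)
    set G : Ω → ℝ := P[fun ω' => g (S ω')|mX] with hGdef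
    have hGbdd : ∀ᵐ ω ∂P, |G ω| ≤ ((1 : NNReal) : ℝ) :=
      ae_bdd_condExp_of_ae_bdd (R := 1)
        (Filter.Eventually.of_forall fun ω => by simpa using hgbdd (S ω))
    -- LHS tendsto
    have hLHS : Filter.Tendsto (fun n => ∫ ω, F n (Y ω) * g (S ω) ∂P) Filter.atTop
        (nhds (∫ ω in S ⁻¹' B, Y ω ∂P)) := by
      have : ∫ ω in S ⁻¹' B, Y ω ∂P = ∫ ω, Y ω * g (S ω) ∂P := by
        rw [hind Y, integral_indicator hSBmeas]
      rw [this]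
      refine tendsto_integral_of_dominated_convergence (fun ω => |Y ω|) ?_ hYint.abs ?_ ?_
      · intro n
        exact (((hFmeas n).comp hY).mul (hgmeas.comp hS)).aestronglyMeasurable
      · intro n
        filter_upwards with ω
        rw [Real.norm_eq_abs, abs_mul]
        calc |F n (Y ω)| * |g (S ω)| ≤ |Y ω| * 1 :=
              mul_le_mul (hFle n _) (hgbdd _) (abs_nonneg _) (abs_nonneg _)
          _ = |Y ω| := mul_one _
      · filter_upwards with ω
        exact (hFtendsto (Y ω)).mul_const _
    -- RHS tendsto
    have hRHS : Filter.Tendsto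
        (fun n => ∫ ω, (P[fun ω' => F n (Y ω')|mX]) ω * G ω ∂P) Filter.atTop
        (nhds (∫ ω, μX ω * G ω ∂P)) := by
      rw [Metric.tendsto_atTop]
      intro ε hε
      rw [Metric.tendsto_atTop] at hL1
      obtain ⟨N, hN⟩ := hL1 ε hε
      refine ⟨N, fun n hn => ?_⟩
      have hcondint : Integrable (P[fun ω' => F n (Y ω')|mX]) P := integrable_condExp
      have hGint : Integrable G P := integrable_condExp
      have hGmul : ∀ (h : Ω → ℝ), Integrable h P → Integrable (fun ω => h ω * G ω) P := by
        intro h hh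
        refine Integrable.mono' hh.abs (hh.aestronglyMeasurable.mul
          hGint.aestronglyMeasurable) ?_
        filter_upwards [hGbdd] with ω hω
        rw [Real.norm_eq_abs, abs_mul]
        calc |h ω| * |G ω| ≤ |h ω| * 1 :=
              mul_le_mul_of_nonneg_left (by simpa using hω) (abs_nonneg _)
          _ = |h ω| := mul_one _
      rw [Real.dist_eq]
      have hsub : (∫ ω, (P[fun ω' => F n (Y ω')|mX]) ω * G ω ∂P) - ∫ ω, μX ω * G ω ∂P
          = ∫ ω, ((P[fun ω' => F n (Y ω')|mX]) ω - μX ω) * G ω ∂P := by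
        rw [← integral_sub (hGmul _ hcondint) (hGmul _ hμXint)]
        congr 1
        funext ω
        ring
      rw [hsub]
      have hFnint : Integrable (fun ω => F n (Y ω)) P :=
        Integrable.mono' hYint.abs ((hFmeas n).comp hY).aestronglyMeasurable
          (Filter.Eventually.of_forall fun ω => by rw [Real.norm_eq_abs]; exact hFle n _)
      have hbound : |∫ ω, ((P[fun ω' => F n (Y ω')|mX]) ω - μX ω) * G ω ∂P|
          ≤ ∫ ω, |F n (Y ω) - Y ω| ∂P := by
        calc |∫ ω, ((P[fun ω' => F n (Y ω')|mX]) ω - μX ω) * G ω ∂P|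
            ≤ ∫ ω, |((P[fun ω' => F n (Y ω')|mX]) ω - μX ω) * G ω| ∂P := by
              simpa only [Real.norm_eq_abs] using norm_integral_le_integral_norm (μ := P)
                (fun ω => ((P[fun ω' => F n (Y ω')|mX]) ω - μX ω) * G ω)
          _ ≤ ∫ ω, |(P[fun ω' => F n (Y ω')|mX]) ω - μX ω| ∂P := by
              refine integral_mono_ae ((hGmul _ (hcondint.sub hμXint)).abs)
                ((hcondint.sub hμXint).abs) ?_
              filter_upwards [hGbdd] with ω hω
              rw [abs_mul]
              calc |(P[fun ω' => F n (Y ω')|mX]) ω - μX ω| * |G ω|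
                  ≤ |(P[fun ω' => F n (Y ω')|mX]) ω - μX ω| * 1 :=
                    mul_le_mul_of_nonneg_left (by simpa using hω) (abs_nonneg _)
                _ = _ := mul_one _
          _ = ∫ ω, |(P[(fun ω' => F n (Y ω')) - Y|mX]) ω| ∂P := by
              rw [hμX]
              refine (integral_congr_ae ?_).symm
              filter_upwards [condExp_sub (μ := P) (m := mX) hFnint hYint] with ω hω
              rw [hω]
              rfl
          _ ≤ ∫ ω, |F n (Y ω) - Y ω| ∂P := by
              simpa using integral_abs_condExp_le ((fun ω' => F n (Y ω')) - Y)
      calc |∫ ω, ((P[fun ω' => F n (Y ω')|mX]) ω - μX ω) * G ω ∂P|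
          ≤ ∫ ω, |F n (Y ω) - Y ω| ∂P := hbound
        _ < ε := by
            have := hN n hn
            rw [Real.dist_eq] at this
            have hnonneg : 0 ≤ ∫ ω, |F n (Y ω) - Y ω| ∂P :=
              integral_nonneg fun ω => abs_nonneg _
            rwa [sub_zero, abs_of_nonneg hnonneg] at this
    -- identify the limit of RHS with ∫_s μX
    have hμXG : ∫ ω, μX ω * G ω ∂P = ∫ ω in S ⁻¹' B, μX ω ∂P := by
      have hμXsm : StronglyMeasurable[mX] μX := hμX ▸ stronglyMeasurable_condExp
      have hμXgint : Integrable (μX * fun ω => g (S ω)) P := by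
        refine Integrable.mono' hμXint.abs (hμXint.aestronglyMeasurable.mul
          (hgmeas.comp hS).aestronglyMeasurable) ?_
        filter_upwards with ω
        rw [Pi.mul_apply, Real.norm_eq_abs, abs_mul]
        calc |μX ω| * |g (S ω)| ≤ |μX ω| * 1 :=
              mul_le_mul_of_nonneg_left (hgbdd _) (abs_nonneg _)
          _ = |μX ω| := mul_one _
      have hmul := condExp_mul_of_stronglyMeasurable_left (m := mX) hμXsm hμXgint hgSint
      have h1 : ∫ ω, μX ω * G ω ∂P = ∫ ω, (P[μX * fun ω' => g (S ω')|mX]) ω ∂P :=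
        (integral_congr_ae hmul).symm
      rw [h1, integral_condExp hmX]
      have : (μX * fun ω => g (S ω)) = (S ⁻¹' B).indicator μX := hind μX
      rw [this, integral_indicator hSBmeas]
    rw [← hμXG]
    exact tendsto_nhds_unique hRHS (hLHS.congr hEq)
  have hcond : (P[μX|mS]) =ᵐ[P] (P[Y|mS]) :=
    ae_eq_condExp_of_forall_setIntegral_eq hmS hYint
      (fun s _ _ => integrable_condExp.integrableOn)
      (fun s hs _ => by rw [setIntegral_condExp hmS hμXint hs]; exact hkey s hs)
      stronglyMeasurable_condExp.aestronglyMeasurable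
  have hsq : ∫ ω, ((P[Y|mS]) ω) ^ 2 ∂P = ∫ ω, ((P[μX|mS]) ω) ^ 2 ∂P := by
    refine integral_congr_ae ?_
    filter_upwards [hcond] with ω hω
    rw [← hω]
  rw [integral_condVar_aux hmS hY2, integral_condVar_aux hmX hY2,
    integral_condVar_aux hmS hμX2, hsq]
  have hμXsq : ∫ ω, ((P[Y|mX]) ω) ^ 2 ∂P = ∫ ω, (μX ω) ^ 2 ∂P := by rw [hμX]
  rw [hμXsq]
  ring
end

section
/- Let (Ω, 𝒜, P) be a probability space, X, S : Ω → ℝ^m random vectors and Y : Ω → ℝ a square-integrable random variable such that Y and S are conditionally independent given the σ-algebra σ(X) generated by X. Then E[(Y − E[Y | σ(S)])²] ≥ E[(Y − E[Y | σ(X)])²]; that is, the Bayes risk of predicting Y from the noised observation S is at least the Bayes risk of predicting Y from X itself. -/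
open MeasureTheory ProbabilityTheory Filter

section Trunc

/-- Truncation of a real number at level `n`. -/
noncomputable def trunc (n : ℕ) (t : ℝ) : ℝ := max (-(n : ℝ)) (min (n : ℝ) t)

lemma trunc_measurable (n : ℕ) : Measurable (trunc n) :=
  measurable_const.max (measurable_const.min measurable_id)

lemma abs_trunc_le (n : ℕ) (t : ℝ) : |trunc n t| ≤ (n : ℝ) := by
  have h0 : (0 : ℝ) ≤ (n : ℝ) := Nat.cast_nonneg n
  rw [abs_le]
  exact ⟨le_max_left _ _, max_le (by linarith) (min_le_left _ _)⟩

lemma abs_trunc_le_abs (n : ℕ) (t : ℝ) : |trunc n t| ≤ |t| := by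
  have h0 : (0 : ℝ) ≤ (n : ℝ) := Nat.cast_nonneg n
  rw [abs_le]
  constructor
  · exact le_max_of_le_right (le_min ((neg_nonpos.2 (abs_nonneg t)).trans h0) (neg_abs_le t))
  · exact max_le (le_trans (by linarith) (abs_nonneg t)) ((min_le_right _ _).trans (le_abs_self t))

lemma tendsto_trunc (t : ℝ) : Tendsto (fun n => trunc n t) atTop (nhds t) := by
  apply tendsto_atTop_of_eventually_const (i₀ := ⌈|t|⌉₊)
  intro n hn
  have h : |t| ≤ (n : ℝ) := le_trans (Nat.le_ceil _) (Nat.cast_le.2 hn)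
  rw [abs_le] at h
  rw [trunc, min_eq_right h.2, max_eq_right h.1]

end Trunc

section Aux

variable {Ω : Type*} [MeasurableSpace Ω] {P : Measure Ω} [IsProbabilityMeasure P]

lemma integrable_of_bound {f : Ω → ℝ} (hf : AEStronglyMeasurable f P) (C : ℝ)
    (h : ∀ᵐ ω ∂P, |f ω| ≤ C) : Integrable f P :=
  ⟨hf, HasFiniteIntegral.of_bounded (C := C) (by simpa [Real.norm_eq_abs] using h)⟩

lemma memℒp_two_mul_integrable {f g : Ω → ℝ} (hf : MemLp f 2 P) (hg : MemLp g 2 P) :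
    Integrable (fun ω => f ω * g ω) P := by
  have h2 : (1 : ENNReal) / 1 = 1 / 2 + 1 / 2 := by
    rw [one_div_one, ENNReal.div_add_div_same,
      (by norm_num : (1 : ENNReal) + 1 = 2), ENNReal.div_self (by norm_num) (by norm_num)]
  have := hg.smul (q := 2) (p := 2) (r := 1) hf
  rw [memLp_one_iff_integrable] at this
  exact this

/-- A conditional expectation of an `L²` function is in `L²`. -/
lemma memℒp_two_condexp_s5 {m : MeasurableSpace Ω} {m0 : MeasurableSpace Ω} {P : Measure Ω}
    [IsProbabilityMeasure P] (hm : m ≤ m0) {f : Ω → ℝ} (hf : MemLp f 2 P) :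
    MemLp (P[f|m]) 2 P := by
  have hG : MemLp ((condExpL2 ℝ ℝ hm (hf.toLp f) : Lp ℝ 2 P) : Ω → ℝ) 2 P := Lp.memLp _
  refine hG.ae_eq ?_
  refine ae_eq_condExp_of_forall_setIntegral_eq hm (hf.integrable one_le_two)
    (fun s _ _ => (hG.integrable one_le_two).integrableOn) (fun s hs hμs => ?_)
    (lpMeas.aestronglyMeasurable _)
  rw [integral_condExpL2_eq hm (hf.toLp f) hs hμs.ne]
  exact setIntegral_congr_ae (hm s hs) ((hf.coeFn_toLp).mono fun x hx _ => hx)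

/-- Pull-out property in integral form: `∫ B f = ∫ B E[f|m]` for `m`-measurable `B`. -/
lemma integral_mul_condexp {m m0 : MeasurableSpace Ω} {P : Measure Ω} [IsProbabilityMeasure P]
    (hm : m ≤ m0) {f B : Ω → ℝ} (hB : StronglyMeasurable[m] B) (hf : Integrable f P)
    (hfB : Integrable (fun ω => B ω * f ω) P) :
    ∫ ω, B ω * f ω ∂P = ∫ ω, B ω * (P[f|m]) ω ∂P := by
  have h1 : ∫ ω, B ω * f ω ∂P = ∫ ω, (P[fun ω => B ω * f ω|m]) ω ∂P :=
    (integral_condExp hm).symm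
  rw [h1]
  refine integral_congr_ae ?_
  have := condExp_mul_of_stronglyMeasurable_left (μ := P) (m := m) hB (g := f) ?_ hf
  · exact (condExp_congr_ae (by filter_upwards with ω; simp [Pi.mul_apply])).trans this
  · exact hfB.congr (by filter_upwards with ω; simp [Pi.mul_apply])

end Aux

section Key

variable {Ω : Type*} [MeasurableSpace Ω] {P : Measure Ω} [IsProbabilityMeasure P]
  {m : ℕ} {X S : Ω → Fin m → ℝ} {Y : Ω → ℝ}

/-- Key identity: for bounded measurable `g`,
`∫ Y ⬝ g(S) = ∫ E[Y|σ(X)] ⬝ g(S)`. -/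
lemma key_bounded
    (hX : Measurable X) (hS : Measurable S) (hY : Measurable Y) (hY2 : MemLp Y 2 P)
    (hci : CondIndepFunGiven P (MeasurableSpace.comap X inferInstance) Y S)
    {g : (Fin m → ℝ) → ℝ} (hg : Measurable g) {C : ℝ} (hgC : ∀ x, |g x| ≤ C) :
    ∫ ω, Y ω * g (S ω) ∂P
      = ∫ ω, (P[Y|MeasurableSpace.comap X inferInstance]) ω * g (S ω) ∂P := by
  have hmX : (MeasurableSpace.comap X inferInstance) ≤ (inferInstance : MeasurableSpace Ω) := hX.comap_le
  set B := P[fun ω => g (S ω)|(MeasurableSpace.comap X inferInstance)] with hBdef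
  have hB_sm : StronglyMeasurable[(MeasurableSpace.comap X inferInstance)] B := stronglyMeasurable_condExp
  have hB_sm0 : AEStronglyMeasurable B P := (hB_sm.mono hmX).aestronglyMeasurable
  have hB_bdd : ∀ᵐ ω ∂P, |B ω| ≤ (C.toNNReal : ℝ) := by
    refine ae_bdd_condExp_of_ae_bdd ?_
    filter_upwards with ω
    exact (hgC (S ω)).trans (Real.le_coe_toNNReal C)
  have hgS_int : Integrable (fun ω => g (S ω)) P :=
    integrable_of_bound ((hg.comp hS).aestronglyMeasurable) C
      (Filter.Eventually.of_forall fun ω => hgC _)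
  have hYint : Integrable Y P := hY2.integrable one_le_two
  have hW_sm : StronglyMeasurable[(MeasurableSpace.comap X inferInstance)] (P[Y|(MeasurableSpace.comap X inferInstance)]) := stronglyMeasurable_condExp
  have hW_int : Integrable (P[Y|(MeasurableSpace.comap X inferInstance)]) P := integrable_condExp
  -- Step 1: the identity for truncations of `Y`.
  have step1 : ∀ n : ℕ, ∫ ω, trunc n (Y ω) * g (S ω) ∂P = ∫ ω, trunc n (Y ω) * B ω ∂P := by
    intro n
    have hTn_meas : Measurable fun ω => trunc n (Y ω) := (trunc_measurable n).comp hY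
    have hn := hci (trunc n) g (trunc_measurable n) hg ⟨n, fun t => abs_trunc_le n t⟩ ⟨C, hgC⟩
    have e1 : ∫ ω, trunc n (Y ω) * g (S ω) ∂P
        = ∫ ω, (P[fun ω' => trunc n (Y ω')|(MeasurableSpace.comap X inferInstance)]) ω * B ω ∂P := by
      rw [← integral_condExp (f := fun ω => trunc n (Y ω) * g (S ω)) hmX]
      exact integral_congr_ae hn
    have hTn_int : Integrable (fun ω => trunc n (Y ω)) P :=
      integrable_of_bound hTn_meas.aestronglyMeasurable n
        (Filter.Eventually.of_forall fun ω => abs_trunc_le n _)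
    have hBTn_int : Integrable (fun ω => B ω * trunc n (Y ω)) P := by
      refine integrable_of_bound (hB_sm0.mul hTn_meas.aestronglyMeasurable)
        ((C.toNNReal : ℝ) * n) ?_
      filter_upwards [hB_bdd] with ω hω
      rw [abs_mul]
      exact mul_le_mul hω (abs_trunc_le n _) (abs_nonneg _) (NNReal.coe_nonneg _)
    have e2 : ∫ ω, B ω * trunc n (Y ω) ∂P = ∫ ω, B ω * (P[fun ω' => trunc n (Y ω')|(MeasurableSpace.comap X inferInstance)]) ω ∂P :=
      integral_mul_condexp hmX hB_sm hTn_int hBTn_int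
    rw [e1]
    calc ∫ ω, (P[fun ω' => trunc n (Y ω')|(MeasurableSpace.comap X inferInstance)]) ω * B ω ∂P
        = ∫ ω, B ω * (P[fun ω' => trunc n (Y ω')|(MeasurableSpace.comap X inferInstance)]) ω ∂P := by simp_rw [mul_comm]
      _ = ∫ ω, B ω * trunc n (Y ω) ∂P := e2.symm
      _ = ∫ ω, trunc n (Y ω) * B ω ∂P := by simp_rw [mul_comm]
  -- Step 2: pass to the limit with dominated convergence.
  have limL : Filter.Tendsto (fun n => ∫ ω, trunc n (Y ω) * g (S ω) ∂P) Filter.atTop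
      (nhds (∫ ω, Y ω * g (S ω) ∂P)) := by
    refine tendsto_integral_of_dominated_convergence (fun ω => |Y ω| * C)
      (fun n => (((trunc_measurable n).comp hY).mul (hg.comp hS)).aestronglyMeasurable)
      (hYint.abs.mul_const C) (fun n => ?_) ?_
    · filter_upwards with ω
      rw [Real.norm_eq_abs, abs_mul]
      exact mul_le_mul (abs_trunc_le_abs n _) (hgC _) (abs_nonneg _) (abs_nonneg _)
    · filter_upwards with ω
      exact (tendsto_trunc (Y ω)).mul_const _
  have limR : Filter.Tendsto (fun n => ∫ ω, trunc n (Y ω) * B ω ∂P) Filter.atTop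
      (nhds (∫ ω, Y ω * B ω ∂P)) := by
    refine tendsto_integral_of_dominated_convergence (fun ω => |Y ω| * (C.toNNReal : ℝ))
      (fun n => (((trunc_measurable n).comp hY).aestronglyMeasurable).mul hB_sm0)
      (hYint.abs.mul_const _) (fun n => ?_) ?_
    · filter_upwards [hB_bdd] with ω hω
      rw [Real.norm_eq_abs, abs_mul]
      exact mul_le_mul (abs_trunc_le_abs n _) hω (abs_nonneg _) (abs_nonneg _)
    · filter_upwards with ω
      exact (tendsto_trunc (Y ω)).mul_const _
  have hYB : ∫ ω, Y ω * g (S ω) ∂P = ∫ ω, Y ω * B ω ∂P := by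
    refine tendsto_nhds_unique ?_ limR
    simpa only [step1] using limL
  -- Step 3: `∫ Y B = ∫ W B`.
  have hBY_int : Integrable (fun ω => B ω * Y ω) P := by
    refine Integrable.mono' (hYint.abs.const_mul ((C.toNNReal : ℝ)))
      (hB_sm0.mul hYint.aestronglyMeasurable) ?_
    filter_upwards [hB_bdd] with ω hω
    rw [Real.norm_eq_abs, abs_mul]
    exact mul_le_mul_of_nonneg_right hω (abs_nonneg _)
  have e3 : ∫ ω, B ω * Y ω ∂P = ∫ ω, B ω * (P[Y|(MeasurableSpace.comap X inferInstance)]) ω ∂P :=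
    integral_mul_condexp hmX hB_sm hYint hBY_int
  -- Step 4: `∫ W g(S) = ∫ W B`.
  have hWg_int : Integrable (fun ω => (P[Y|(MeasurableSpace.comap X inferInstance)]) ω * g (S ω)) P := by
    refine Integrable.mono' (hW_int.abs.mul_const C)
      ((hW_sm.mono hmX).aestronglyMeasurable.mul (hg.comp hS).aestronglyMeasurable) ?_
    filter_upwards with ω
    rw [Real.norm_eq_abs, abs_mul]
    exact mul_le_mul_of_nonneg_left (hgC _) (abs_nonneg _)
  have e4 : ∫ ω, (P[Y|(MeasurableSpace.comap X inferInstance)]) ω * g (S ω) ∂P = ∫ ω, (P[Y|(MeasurableSpace.comap X inferInstance)]) ω * B ω ∂P :=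
    integral_mul_condexp hmX hW_sm hgS_int hWg_int
  rw [hYB, e4]
  calc ∫ ω, Y ω * B ω ∂P = ∫ ω, B ω * Y ω ∂P := by simp_rw [mul_comm]
    _ = ∫ ω, B ω * (P[Y|(MeasurableSpace.comap X inferInstance)]) ω ∂P := e3
    _ = ∫ ω, (P[Y|(MeasurableSpace.comap X inferInstance)]) ω * B ω ∂P := by simp_rw [mul_comm]

end Key

/-- if `Y` and `S` are conditionally independent given `σ(X)`,
then the Bayes risk of predicting `Y` from `S` is at least the Bayes risk of
predicting `Y` from `X`:
`E[(Y − E[Y|σ(S)])²] ≥ E[(Y − E[Y|σ(X)])²]`. -/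
theorem bayes_risk_noised_ge
    {Ω : Type*} [MeasurableSpace Ω] {P : Measure Ω} [IsProbabilityMeasure P]
    {m : ℕ} (X S : Ω → Fin m → ℝ) (Y : Ω → ℝ)
    (hX : Measurable X) (hS : Measurable S) (hY : Measurable Y)
    (hY2 : MemLp Y 2 P)
    (hci : CondIndepFunGiven P (MeasurableSpace.comap X inferInstance) Y S) :
    ∫ ω, (Y ω - (P[Y | MeasurableSpace.comap S inferInstance]) ω) ^ 2 ∂P
      ≥ ∫ ω, (Y ω - (P[Y | MeasurableSpace.comap X inferInstance]) ω) ^ 2 ∂P := by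
  have hmX : (MeasurableSpace.comap X inferInstance) ≤ (inferInstance : MeasurableSpace Ω) := hX.comap_le
  have hmS : (MeasurableSpace.comap S inferInstance) ≤ (inferInstance : MeasurableSpace Ω) := hS.comap_le
  set W := P[Y|(MeasurableSpace.comap X inferInstance)] with hWdef
  set Z := P[Y|(MeasurableSpace.comap S inferInstance)] with hZdef
  have hYint : Integrable Y P := hY2.integrable one_le_two
  have hW2 : MemLp W 2 P := memℒp_two_condexp_s5 (P := P) hmX hY2
  have hZ2 : MemLp Z 2 P := memℒp_two_condexp_s5 (P := P) hmS hY2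
  -- factor `Z` through `S` almost everywhere
  obtain ⟨g, hg, hfac⟩ : ∃ g : (Fin m → ℝ) → ℝ, Measurable g ∧ Z =ᵐ[P] fun ω => g (S ω) := by
    refine ⟨fun x => ∫ y, y ∂condDistrib Y S P x, ?_, ?_⟩
    · have h : StronglyMeasurable fun x =>
          ∫ y, (fun p : (Fin m → ℝ) × ℝ => p.2) (x, y) ∂(condDistrib Y S P) x :=
        (measurable_snd.stronglyMeasurable).integral_kernel_prod_right'
      exact h.measurable
    · exact condExp_ae_eq_integral_condDistrib' hS hYint
  have hgS2 : MemLp (fun ω => g (S ω)) 2 P := hZ2.ae_eq hfac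
  -- key identity `∫ Y Z = ∫ W Z`
  have key : ∫ ω, Y ω * Z ω ∂P = ∫ ω, W ω * Z ω ∂P := by
    have stepk : ∀ k : ℕ,
        ∫ ω, Y ω * trunc k (g (S ω)) ∂P = ∫ ω, W ω * trunc k (g (S ω)) ∂P := fun k =>
      key_bounded hX hS hY hY2 hci ((trunc_measurable k).comp hg)
        (fun x => abs_trunc_le k (g x))
    have hYgS_int : Integrable (fun ω => Y ω * g (S ω)) P := memℒp_two_mul_integrable hY2 hgS2
    have hWgS_int : Integrable (fun ω => W ω * g (S ω)) P := memℒp_two_mul_integrable hW2 hgS2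
    have hW_meas : AEStronglyMeasurable W P :=
      (stronglyMeasurable_condExp.mono hmX).aestronglyMeasurable
    have limL : Filter.Tendsto (fun k => ∫ ω, Y ω * trunc k (g (S ω)) ∂P) Filter.atTop
        (nhds (∫ ω, Y ω * g (S ω) ∂P)) := by
      refine tendsto_integral_of_dominated_convergence (fun ω => |Y ω * g (S ω)|)
        (fun k => (hY.mul ((trunc_measurable k).comp (hg.comp hS))).aestronglyMeasurable)
        hYgS_int.abs (fun k => ?_) ?_
      · filter_upwards with ω
        rw [Real.norm_eq_abs, abs_mul, abs_mul]
        exact mul_le_mul_of_nonneg_left (abs_trunc_le_abs k _) (abs_nonneg _)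
      · filter_upwards with ω
        exact (tendsto_trunc (g (S ω))).const_mul _
    have limR : Filter.Tendsto (fun k => ∫ ω, W ω * trunc k (g (S ω)) ∂P) Filter.atTop
        (nhds (∫ ω, W ω * g (S ω) ∂P)) := by
      refine tendsto_integral_of_dominated_convergence (fun ω => |W ω * g (S ω)|)
        (fun k => hW_meas.mul ((trunc_measurable k).comp (hg.comp hS)).aestronglyMeasurable)
        hWgS_int.abs (fun k => ?_) ?_
      · filter_upwards with ω
        rw [Real.norm_eq_abs, abs_mul, abs_mul]
        exact mul_le_mul_of_nonneg_left (abs_trunc_le_abs k _) (abs_nonneg _)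
      · filter_upwards with ω
        exact (tendsto_trunc (g (S ω))).const_mul _
    have h1 : ∫ ω, Y ω * g (S ω) ∂P = ∫ ω, W ω * g (S ω) ∂P := by
      refine tendsto_nhds_unique ?_ limR
      simpa only [stepk] using limL
    calc ∫ ω, Y ω * Z ω ∂P
        = ∫ ω, Y ω * g (S ω) ∂P := integral_congr_ae (by
          filter_upwards [hfac] with ω h; rw [h])
      _ = ∫ ω, W ω * g (S ω) ∂P := h1
      _ = ∫ ω, W ω * Z ω ∂P := integral_congr_ae (by
          filter_upwards [hfac] with ω h; rw [h])
  -- `∫ Y W = ∫ W²`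
  have hWY_int : Integrable (fun ω => W ω * Y ω) P := memℒp_two_mul_integrable hW2 hY2
  have hYW : ∫ ω, W ω * Y ω ∂P = ∫ ω, W ω * W ω ∂P :=
    integral_mul_condexp hmX stronglyMeasurable_condExp hYint hWY_int
  -- integrability of all products
  have hYY : Integrable (fun ω => Y ω * Y ω) P := memℒp_two_mul_integrable hY2 hY2
  have hZZ : Integrable (fun ω => Z ω * Z ω) P := memℒp_two_mul_integrable hZ2 hZ2
  have hWW : Integrable (fun ω => W ω * W ω) P := memℒp_two_mul_integrable hW2 hW2
  have hYZ_int : Integrable (fun ω => Y ω * Z ω) P := memℒp_two_mul_integrable hY2 hZ2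
  have hYW_int : Integrable (fun ω => Y ω * W ω) P := memℒp_two_mul_integrable hY2 hW2
  have hWZ_int : Integrable (fun ω => W ω * Z ω) P := memℒp_two_mul_integrable hW2 hZ2
  -- expansions of the squares
  have eYZ : ∫ ω, (Y ω - Z ω) ^ 2 ∂P
      = ∫ ω, Y ω * Y ω ∂P - 2 * ∫ ω, Y ω * Z ω ∂P + ∫ ω, Z ω * Z ω ∂P := by
    have h : (fun ω => (Y ω - Z ω) ^ 2)
        = fun ω => (Y ω * Y ω - 2 * (Y ω * Z ω)) + Z ω * Z ω := by funext ω; ring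
    have hf1 : Integrable (fun ω => Y ω * Y ω - 2 * (Y ω * Z ω)) P :=
      hYY.sub (hYZ_int.const_mul 2)
    rw [h, integral_add hf1 hZZ, integral_sub hYY (hYZ_int.const_mul 2),
      integral_const_mul 2 _]
  have eYW : ∫ ω, (Y ω - W ω) ^ 2 ∂P
      = ∫ ω, Y ω * Y ω ∂P - 2 * ∫ ω, Y ω * W ω ∂P + ∫ ω, W ω * W ω ∂P := by
    have h : (fun ω => (Y ω - W ω) ^ 2)
        = fun ω => (Y ω * Y ω - 2 * (Y ω * W ω)) + W ω * W ω := by funext ω; ring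
    have hf1 : Integrable (fun ω => Y ω * Y ω - 2 * (Y ω * W ω)) P :=
      hYY.sub (hYW_int.const_mul 2)
    rw [h, integral_add hf1 hWW, integral_sub hYY (hYW_int.const_mul 2),
      integral_const_mul 2 _]
  have eWZ : ∫ ω, (W ω - Z ω) ^ 2 ∂P
      = ∫ ω, W ω * W ω ∂P - 2 * ∫ ω, W ω * Z ω ∂P + ∫ ω, Z ω * Z ω ∂P := by
    have h : (fun ω => (W ω - Z ω) ^ 2)
        = fun ω => (W ω * W ω - 2 * (W ω * Z ω)) + Z ω * Z ω := by funext ω; ring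
    have hf1 : Integrable (fun ω => W ω * W ω - 2 * (W ω * Z ω)) P :=
      hWW.sub (hWZ_int.const_mul 2)
    rw [h, integral_add hf1 hZZ, integral_sub hWW (hWZ_int.const_mul 2),
      integral_const_mul 2 _]
  have hpos : 0 ≤ ∫ ω, (W ω - Z ω) ^ 2 ∂P := integral_nonneg fun ω => sq_nonneg _
  have hcomm : ∫ ω, Y ω * W ω ∂P = ∫ ω, W ω * Y ω ∂P := by simp_rw [mul_comm]
  rw [ge_iff_le, eYZ, eYW]
  rw [eWZ] at hpos
  linarith [key, hYW, hcomm, hpos]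
end

section
/- Let (Ω, 𝒜, P) be a probability space, X : Ω → ℝ^m a random vector, Y : Ω → ℝ a square-integrable random variable, and μ(X) := E[Y | σ(X)]. Let α, α′ ∈ ℝ^m have strictly positive components, and let ε, ε′ : Ω → ℝ^m each be independent of the pair (X, Y), with independent components ε_i ~ N(0, α_i) and ε′_i ~ N(0, α′_i); set S = X + ε and S′ = X + ε′. Then E[(Y − E[Y | σ(S)])²] − E[(Y − E[Y | σ(S′)])²] = E[(E[μ(X) | σ(S′)])²] − E[(E[μ(X) | σ(S)])²]. -/
open MeasureTheory ProbabilityTheory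
open scoped ENNReal

section Aux

/-- Monotonicity of independence of σ-algebras. -/
lemma indep_of_le' {Ω : Type*} {m₁ m₂ m₃ m₄ m₀ : MeasurableSpace Ω} {P : Measure Ω}
    (h : Indep m₁ m₂ P) (h₁ : m₃ ≤ m₁) (h₂ : m₄ ≤ m₂) : Indep m₃ m₄ P := by
  rw [Indep_iff] at h ⊢
  exact fun t1 t2 ht1 ht2 => h t1 t2 (h₁ _ ht1) (h₂ _ ht2)

/-- The conditional expectation of an `L²` function is in `L²`. -/
lemma memL2_condexp {Ω : Type*} {m m₀ : MeasurableSpace Ω} {P : Measure Ω}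
    [IsProbabilityMeasure P] (hm : m ≤ m₀) {f : Ω → ℝ}
    (hf : MemLp f 2 P) : MemLp (P[f|m]) 2 P := by
  have hGmem : MemLp ((condExpL2 ℝ ℝ hm (hf.toLp f) : lpMeas ℝ ℝ m 2 P) : Ω → ℝ) 2 P := by
    exact Lp.memLp _
  have h : ((condExpL2 ℝ ℝ hm (hf.toLp f) : lpMeas ℝ ℝ m 2 P) : Ω → ℝ) =ᵐ[P] P[f|m] := by
    refine ae_eq_condExp_of_forall_setIntegral_eq hm (hf.integrable one_le_two)
      (fun s _ _ => (hGmem.integrable one_le_two).integrableOn) (fun s hs hμs => ?_)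
      (lpMeas.aestronglyMeasurable _)
    rw [integral_condExpL2_eq hm (hf.toLp f) hs hμs.ne]
    exact setIntegral_congr_ae (hm s hs) ((hf.coeFn_toLp).mono fun x hx _ => hx)
  exact hGmem.ae_eq h

/-- Key lemma: conditioning `Y` on the noised observation `S = X + ε` is the same as
conditioning `μX = E[Y|σ(X)]` on it, when `ε` is independent of `(X, Y)`. -/
lemma condexp_noised {Ω : Type*} [m₀ : MeasurableSpace Ω] {P : Measure Ω}
    [IsProbabilityMeasure P]
    {m : ℕ} (X : Ω → Fin m → ℝ) (Y : Ω → ℝ) (ε : Ω → Fin m → ℝ)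
    (hX : Measurable X) (hY : Measurable Y) (hε : Measurable ε)
    (hYint : Integrable Y P)
    (hindep : IndepFun ε (fun ω => (X ω, Y ω)) P) :
    P[Y | MeasurableSpace.comap (fun ω => X ω + ε ω) inferInstance]
      =ᵐ[P] P[(P[Y | MeasurableSpace.comap X inferInstance]) |
        MeasurableSpace.comap (fun ω => X ω + ε ω) inferInstance] := by
  set pair : Ω → (Fin m → ℝ) × (Fin m → ℝ) := fun ω => (X ω, ε ω) with hpair_def
  have hpair : Measurable pair := hX.prodMk hε
  have hmXε : MeasurableSpace.comap pair inferInstance ≤ m₀ := hpair.comap_le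
  have hmX : MeasurableSpace.comap X inferInstance ≤ m₀ := hX.comap_le
  have hXle : MeasurableSpace.comap X inferInstance
      ≤ MeasurableSpace.comap pair inferInstance := by
    have h1 : MeasurableSpace.comap X inferInstance = MeasurableSpace.comap pair
        (MeasurableSpace.comap Prod.fst inferInstance) := by
      rw [MeasurableSpace.comap_comp]; rfl
    rw [h1]
    exact MeasurableSpace.comap_mono measurable_fst.comap_le
  have hSle : MeasurableSpace.comap (fun ω => X ω + ε ω) inferInstance
      ≤ MeasurableSpace.comap pair inferInstance := by
    have h1 : MeasurableSpace.comap (fun ω => X ω + ε ω) inferInstance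
        = MeasurableSpace.comap pair
          (MeasurableSpace.comap (fun p : (Fin m → ℝ) × (Fin m → ℝ) => p.1 + p.2)
            inferInstance) := by
      rw [MeasurableSpace.comap_comp]; rfl
    rw [h1]
    exact MeasurableSpace.comap_mono (measurable_fst.add measurable_snd).comap_le
  set μX : Ω → ℝ := P[Y | MeasurableSpace.comap X inferInstance] with hμX_def
  have hμXint : Integrable μX P := integrable_condExp
  -- the key set-integral equality on σ(X, ε)
  have key : ∀ s, MeasurableSet[MeasurableSpace.comap pair inferInstance] s →
      ∫ ω in s, μX ω ∂P = ∫ ω in s, Y ω ∂P := by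
    rintro s ⟨T, hT, rfl⟩
    revert T
    have hind : Indep (MeasurableSpace.comap ε inferInstance)
        (MeasurableSpace.comap (fun ω => (X ω, Y ω)) inferInstance) P :=
      (IndepFun_iff_Indep _ _ P).1 hindep
    refine MeasurableSpace.induction_on_inter generateFrom_prod.symm isPiSystem_prod ?_ ?_ ?_ ?_
    · simp
    · rintro _ ⟨B, hB, C', hC', rfl⟩
      have hBm : MeasurableSet B := hB
      have hCm : MeasurableSet C' := hC'
      have hpre : pair ⁻¹' (B ×ˢ C') = X ⁻¹' B ∩ ε ⁻¹' C' := Set.mk_preimage_prod X ε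
      set f₀ : Ω → ℝ := (ε ⁻¹' C').indicator (fun _ => (1 : ℝ)) with hf₀_def
      have hf₀int : Integrable f₀ P := (integrable_const (1 : ℝ)).indicator (hε hCm)
      have hf₀meas : Measurable[MeasurableSpace.comap ε inferInstance] f₀ :=
        measurable_const.indicator ⟨C', hCm, rfl⟩
      have hXYle : MeasurableSpace.comap X inferInstance
          ≤ MeasurableSpace.comap (fun ω => (X ω, Y ω)) inferInstance := by
        have h1 : MeasurableSpace.comap X inferInstance
            = MeasurableSpace.comap (fun ω => (X ω, Y ω))
              (MeasurableSpace.comap Prod.fst inferInstance) := by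
          rw [MeasurableSpace.comap_comp]; rfl
        rw [h1]
        exact MeasurableSpace.comap_mono measurable_fst.comap_le
      have hsetB : MeasurableSet[MeasurableSpace.comap X inferInstance] (X ⁻¹' B) :=
        ⟨B, hBm, rfl⟩
      -- common computation for an integrable Z measurable wrt σ(X,Y)
      have hmain : ∀ (Z : Ω → ℝ), Integrable Z P →
          Measurable[MeasurableSpace.comap (fun ω => (X ω, Y ω)) inferInstance] Z →
          ∫ ω in pair ⁻¹' (B ×ˢ C'), Z ω ∂P
            = (∫ ω, f₀ ω ∂P) * ∫ ω in X ⁻¹' B, Z ω ∂P := by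
        intro Z hZint hZmeas
        set g : Ω → ℝ := (X ⁻¹' B).indicator Z with hg_def
        have hgint : Integrable g P := hZint.indicator (hX hBm)
        have hgmeas : Measurable[MeasurableSpace.comap (fun ω => (X ω, Y ω)) inferInstance] g :=
          hZmeas.indicator (hXYle _ hsetB)
        have hindfg : IndepFun f₀ g P := by
          rw [IndepFun_iff_Indep]
          exact indep_of_le' (m₀ := m₀) hind (measurable_iff_comap_le.mp hf₀meas)
            (measurable_iff_comap_le.mp hgmeas)
        have heq : ∀ ω, (pair ⁻¹' (B ×ˢ C')).indicator Z ω = (f₀ * g) ω := by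
          intro ω
          rw [hpre]
          by_cases h1 : ω ∈ X ⁻¹' B <;> by_cases h2 : ω ∈ ε ⁻¹' C' <;>
            simp [hf₀_def, hg_def, Set.indicator, h1, h2]
        rw [← integral_indicator (hpair (hBm.prod hCm)), integral_congr_ae
          (Filter.Eventually.of_forall heq), hindfg.integral_mul_eq_mul_integral hf₀int.aestronglyMeasurable hgint.aestronglyMeasurable,
          hg_def, integral_indicator (hX hBm)]
      have hZY : Measurable[MeasurableSpace.comap (fun ω => (X ω, Y ω)) inferInstance] Y := by
        have h2 : Measurable[MeasurableSpace.comap (fun ω => (X ω, Y ω)) inferInstance]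
            (fun ω => (X ω, Y ω)) := comap_measurable _
        exact measurable_snd.comp h2
      have hZμX : Measurable[MeasurableSpace.comap (fun ω => (X ω, Y ω)) inferInstance] μX :=
        ((stronglyMeasurable_condExp
          (m := MeasurableSpace.comap X inferInstance)).measurable).mono hXYle le_rfl
      rw [hmain Y hYint hZY, hmain μX hμXint hZμX,
        setIntegral_condExp hmX hYint hsetB]
    · intro T hTm hTeq
      have hc : pair ⁻¹' Tᶜ = (pair ⁻¹' T)ᶜ := rfl
      have h1 := integral_add_compl (hpair hTm) hμXint
      have h2 := integral_add_compl (hpair hTm) hYint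
      have h3 : ∫ ω, μX ω ∂P = ∫ ω, Y ω ∂P := integral_condExp hmX
      rw [hc]
      linarith
    · intro g hgd hgm hgeq
      have hc : pair ⁻¹' (⋃ i, g i) = ⋃ i, pair ⁻¹' (g i) := Set.preimage_iUnion
      rw [hc, integral_iUnion (fun i => hpair (hgm i))
          (hgd.mono fun i j h => h.preimage pair) hμXint.integrableOn,
        integral_iUnion (fun i => hpair (hgm i))
          (hgd.mono fun i j h => h.preimage pair) hYint.integrableOn]
      exact tsum_congr hgeq
  -- μX is a version of E[Y | σ(X,ε)]
  have h1 : μX =ᵐ[P] P[Y | MeasurableSpace.comap pair inferInstance] :=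
    ae_eq_condExp_of_forall_setIntegral_eq hmXε hYint
      (fun s _ _ => hμXint.integrableOn) (fun s hs _ => key s hs)
      (StronglyMeasurable.aestronglyMeasurable ((stronglyMeasurable_condExp
        (m := MeasurableSpace.comap X inferInstance)).mono hXle))
  calc P[Y | MeasurableSpace.comap (fun ω => X ω + ε ω) inferInstance]
      =ᵐ[P] P[(P[Y | MeasurableSpace.comap pair inferInstance]) |
          MeasurableSpace.comap (fun ω => X ω + ε ω) inferInstance] :=
        (condExp_condExp_of_le hSle hmXε).symm
    _ =ᵐ[P] P[μX | MeasurableSpace.comap (fun ω => X ω + ε ω) inferInstance] :=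
        condExp_congr_ae h1.symm

/-- Pythagoras for the conditional expectation. -/
lemma pyth_condexp {Ω : Type*} {m m₀ : MeasurableSpace Ω} {P : Measure Ω}
    [IsProbabilityMeasure P] (hm : m ≤ m₀) {Y : Ω → ℝ}
    (hY2 : MemLp Y 2 P) :
    ∫ ω, (Y ω - (P[Y|m]) ω) ^ 2 ∂P
      = (∫ ω, (Y ω) ^ 2 ∂P) - ∫ ω, ((P[Y|m]) ω) ^ 2 ∂P := by
  set c : Ω → ℝ := P[Y|m] with hc_def
  have hc2 : MemLp c 2 P := memL2_condexp hm hY2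
  have hY2i : Integrable (fun ω => (Y ω) ^ 2) P := hY2.integrable_sq
  have hc2i : Integrable (fun ω => (c ω) ^ 2) P := hc2.integrable_sq
  have hYint : Integrable Y P := hY2.integrable one_le_two
  have hcY : Integrable (fun ω => c ω * Y ω) P := by
    have h12 : (1 : ℝ≥0∞) / 1 = 1 / 2 + 1 / 2 := by
      rw [ENNReal.add_halves, one_div_one]
    exact (hY2.smul hc2 (r := 1)).integrable le_rfl
  have hkey : ∫ ω, c ω * Y ω ∂P = ∫ ω, (c ω) ^ 2 ∂P := by
    have hcY' : Integrable (c * Y) P := by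
      exact hcY
    have hpull : P[c * Y|m] =ᵐ[P] c * P[Y|m] :=
      condExp_mul_of_stronglyMeasurable_left stronglyMeasurable_condExp hcY' hYint
    have h1 : ∫ ω, c ω * Y ω ∂P = ∫ ω, (P[c * Y|m]) ω ∂P := by
      rw [integral_condExp hm]
      rfl
    rw [h1, integral_congr_ae hpull]
    refine integral_congr_ae (Filter.Eventually.of_forall fun ω => ?_)
    simp [sq, ← hc_def]
  have hexp : ∀ ω, (Y ω - c ω) ^ 2 = (Y ω) ^ 2 - 2 * (c ω * Y ω) + (c ω) ^ 2 := by
    intro ω; ring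
  have hsub : Integrable (fun ω => Y ω ^ 2 - 2 * (c ω * Y ω)) P :=
    hY2i.sub (hcY.const_mul 2)
  rw [integral_congr_ae (Filter.Eventually.of_forall hexp), integral_add hsub hc2i,
    integral_sub hY2i (hcY.const_mul 2), integral_const_mul, hkey]
  ring

end Aux

/-- for two noise levels `α`, `α′` with corresponding noised
observations `S = X + ε`, `S′ = X + ε′` (each noise independent of `(X, Y)`,
with independent Gaussian components of variances `α i`, `α′ i`), the
difference of Bayes risks equals
`E[(E[μ(X)|σ(S′)])²] − E[(E[μ(X)|σ(S)])²]`, where `μ(X) = E[Y|σ(X)]`. -/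
theorem bayes_risk_difference
    {Ω : Type*} [MeasurableSpace Ω] {P : Measure Ω} [IsProbabilityMeasure P]
    {m : ℕ} (X : Ω → Fin m → ℝ) (Y : Ω → ℝ) (ε ε' : Ω → Fin m → ℝ)
    (hX : Measurable X) (hY : Measurable Y) (hε : Measurable ε) (hε' : Measurable ε')
    (hY2 : MemLp Y 2 P)
    (α α' : Fin m → ℝ) (hα : ∀ i, 0 < α i) (hα' : ∀ i, 0 < α' i)
    (hindep : IndepFun ε (fun ω => (X ω, Y ω)) P)
    (hindep' : IndepFun ε' (fun ω => (X ω, Y ω)) P)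
    (hcomp : iIndepFun (fun i ω => ε ω i) P)
    (hcomp' : iIndepFun (fun i ω => ε' ω i) P)
    (hgauss : ∀ i, Measure.map (fun ω => ε ω i) P = gaussianReal 0 ⟨α i, (hα i).le⟩)
    (hgauss' : ∀ i, Measure.map (fun ω => ε' ω i) P = gaussianReal 0 ⟨α' i, (hα' i).le⟩)
    (S S' : Ω → Fin m → ℝ) (hS : S = fun ω => X ω + ε ω) (hS' : S' = fun ω => X ω + ε' ω)
    (μX : Ω → ℝ) (hμX : μX = P[Y | MeasurableSpace.comap X inferInstance]) :
    (∫ ω, (Y ω - (P[Y | MeasurableSpace.comap S inferInstance]) ω) ^ 2 ∂P)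
      - (∫ ω, (Y ω - (P[Y | MeasurableSpace.comap S' inferInstance]) ω) ^ 2 ∂P)
    = (∫ ω, ((P[μX | MeasurableSpace.comap S' inferInstance]) ω) ^ 2 ∂P)
      - ∫ ω, ((P[μX | MeasurableSpace.comap S inferInstance]) ω) ^ 2 ∂P := by
  subst hS hS' hμX
  have hmS : MeasurableSpace.comap (fun ω => X ω + ε ω) inferInstance ≤ _ :=
    (hX.add hε).comap_le
  have hmS' : MeasurableSpace.comap (fun ω => X ω + ε' ω) inferInstance ≤ _ :=
    (hX.add hε').comap_le
  have hYint : Integrable Y P := hY2.integrable one_le_two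
  have hkey := condexp_noised X Y ε hX hY hε hYint hindep
  have hkey' := condexp_noised X Y ε' hX hY hε' hYint hindep'
  have hsq : ∫ ω, ((P[(P[Y | MeasurableSpace.comap X inferInstance]) |
        MeasurableSpace.comap (fun ω => X ω + ε ω) inferInstance]) ω) ^ 2 ∂P
      = ∫ ω, ((P[Y | MeasurableSpace.comap (fun ω => X ω + ε ω) inferInstance]) ω) ^ 2 ∂P :=
    integral_congr_ae (hkey.mono fun ω h => by simp [h])
  have hsq' : ∫ ω, ((P[(P[Y | MeasurableSpace.comap X inferInstance]) |
        MeasurableSpace.comap (fun ω => X ω + ε' ω) inferInstance]) ω) ^ 2 ∂P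
      = ∫ ω, ((P[Y | MeasurableSpace.comap (fun ω => X ω + ε' ω) inferInstance]) ω) ^ 2 ∂P :=
    integral_congr_ae (hkey'.mono fun ω h => by simp [h])
  rw [pyth_condexp hmS hY2, pyth_condexp hmS' hY2, hsq, hsq']
  ring
end

section
/- Let m, n be positive integers, x_1, …, x_n ∈ ℝ^m, and α ∈ ℝ^m with α_i > 0 for all i. On a probability space (Ω, 𝒜, P), let J : Ω → {1, …, n} be uniformly distributed, let ε : Ω → ℝ^m be independent of J with independent components ε_i ~ N(0, α_i), and set S = x_J + ε. Define for s ∈ ℝ^m the kernel weights w_j(s, α) = exp(−½ Σ_{i=1}^m (x_{j,i} − s_i)²/α_i) / Σ_{k=1}^n exp(−½ Σ_{i=1}^m (x_{k,i} − s_i)²/α_i). Then for any function c : {1, …, n} → ℝ, E[c(J) | σ(S)] = Σ_{j=1}^n w_j(S, α) c(j) almost surely; consequently E[(E[c(J) | σ(S)])²] = E[(Σ_{j=1}^n w_j(S, α) c(j))²]. -/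
open MeasureTheory ProbabilityTheory

/-- Gaussian kernel weights
`w_j(s, α) = exp(−½ Σᵢ (x_{j,i} − sᵢ)²/αᵢ) / Σₖ exp(−½ Σᵢ (x_{k,i} − sᵢ)²/αᵢ)`. -/
noncomputable def kernelWeight {m n : ℕ} (x : Fin n → Fin m → ℝ)
    (j : Fin n) (s : Fin m → ℝ) (α : Fin m → ℝ) : ℝ :=
  Real.exp (-(1 / 2) * ∑ i, (x j i - s i) ^ 2 / α i) /
    ∑ k, Real.exp (-(1 / 2) * ∑ i, (x k i - s i) ^ 2 / α i)

open scoped NNReal ENNReal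

lemma pi_gauss_withDensity {m : ℕ} (v : Fin m → ℝ≥0) (hv : ∀ i, v i ≠ 0) :
    Measure.pi (fun i => gaussianReal 0 (v i)) =
      (volume : Measure (Fin m → ℝ)).withDensity
        (fun e => ENNReal.ofReal (∏ i, gaussianPDFReal 0 (v i) (e i))) := by
  refine Measure.pi_eq fun s hs => ?_
  rw [withDensity_apply _ (MeasurableSet.univ_pi hs),
    ← lintegral_indicator (MeasurableSet.univ_pi hs) _]
  have h1 : ∀ e : Fin m → ℝ,
      (Set.univ.pi s).indicator
        (fun e => ENNReal.ofReal (∏ i, gaussianPDFReal 0 (v i) (e i))) e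
      = ENNReal.ofReal (∏ i, (s i).indicator (gaussianPDFReal 0 (v i)) (e i)) := by
    intro e
    by_cases he : e ∈ Set.univ.pi s
    · rw [Set.indicator_of_mem he]
      congr 1
      exact Finset.prod_congr rfl fun i _ =>
        (Set.indicator_of_mem (he i (Set.mem_univ i)) _).symm
    · rw [Set.indicator_of_notMem he]
      simp only [Set.mem_pi, Set.mem_univ, forall_true_left, not_forall] at he
      obtain ⟨i, hi⟩ := he
      rw [Finset.prod_eq_zero (Finset.mem_univ i) (Set.indicator_of_notMem hi _),
        ENNReal.ofReal_zero]
  rw [lintegral_congr h1]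
  have hint : Integrable (fun e : Fin m → ℝ =>
      ∏ i, (s i).indicator (gaussianPDFReal 0 (v i)) (e i)) :=
    Integrable.fintype_prod (f := fun i t => (s i).indicator (gaussianPDFReal 0 (v i)) t)
      (fun i => (integrable_gaussianPDFReal 0 (v i)).indicator (hs i))
  rw [← ofReal_integral_eq_lintegral_ofReal hint (ae_of_all _ fun e =>
      Finset.prod_nonneg fun i _ => Set.indicator_nonneg
        (fun t _ => gaussianPDFReal_nonneg 0 (v i) t) _),
    MeasureTheory.volume_pi, integral_fintype_prod_eq_prod (𝕜 := ℝ)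
      (f := fun i t => (s i).indicator (gaussianPDFReal 0 (v i)) t),
    ENNReal.ofReal_prod_of_nonneg (fun i _ => integral_nonneg
      (Set.indicator_nonneg (fun t _ => gaussianPDFReal_nonneg 0 (v i) t)))]
  refine Finset.prod_congr rfl fun i _ => ?_
  rw [integral_indicator (hs i), gaussianReal_apply_eq_integral 0 (hv i) (s i)]

lemma key_integral {Ω : Type*} [MeasurableSpace Ω] {P : Measure Ω} [IsProbabilityMeasure P]
    {m n : ℕ} (x : Fin n → Fin m → ℝ) (v : Fin m → ℝ≥0) (hv : ∀ i, v i ≠ 0)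
    (J : Ω → Fin n) (hJ : Measurable J)
    (ε : Ω → Fin m → ℝ) (hε : Measurable ε)
    (hindep : IndepFun ε J P)
    (hmapε : Measure.map ε P = Measure.pi (fun i => gaussianReal 0 (v i)))
    (c' : Fin n → ℝ) (h : (Fin m → ℝ) → ℝ) (hh : Measurable h) (C : ℝ)
    (hC : ∀ s, |h s| ≤ C) :
    ∫ ω, c' (J ω) * h (x (J ω) + ε ω) ∂P
      = ∑ j, ((Measure.map J P) {j}).toReal *
          (c' j * ∫ s, h s * ∏ i, gaussianPDFReal 0 (v i) (s i - x j i)) := by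
  have hxm : Measurable x := measurable_of_countable x
  have hF : Measurable (fun p : Fin n × (Fin m → ℝ) => c' p.1 * h (x p.1 + p.2)) :=
    ((measurable_of_countable c').comp measurable_fst).mul
      (hh.comp ((hxm.comp measurable_fst).add measurable_snd))
  have hJε : Measure.map (fun ω => (J ω, ε ω)) P
      = (Measure.map J P).prod (Measure.map ε P) :=
    (indepFun_iff_map_prod_eq_prod_map_map hJ.aemeasurable hε.aemeasurable).mp hindep.symm
  haveI : IsProbabilityMeasure (Measure.map J P) := Measure.isProbabilityMeasure_map hJ.aemeasurable
  haveI : IsProbabilityMeasure (Measure.map ε P) := Measure.isProbabilityMeasure_map hε.aemeasurable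
  have h0C : 0 ≤ C := le_trans (abs_nonneg _) (hC 0)
  have hFint : Integrable (fun p : Fin n × (Fin m → ℝ) => c' p.1 * h (x p.1 + p.2))
      ((Measure.map J P).prod (Measure.map ε P)) := by
    refine Integrable.mono' (integrable_const ((∑ j, |c' j|) * C))
      hF.aestronglyMeasurable (ae_of_all _ fun p => ?_)
    have : ‖c' p.1 * h (x p.1 + p.2)‖ = |c' p.1| * |h (x p.1 + p.2)| := by
      rw [Real.norm_eq_abs, abs_mul]
    rw [this]
    exact mul_le_mul (Finset.single_le_sum (fun j _ => abs_nonneg (c' j))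
      (Finset.mem_univ p.1)) (hC _) (abs_nonneg _)
      (Finset.sum_nonneg fun j _ => abs_nonneg _)
  have hprod_meas : Measurable fun e : Fin m → ℝ =>
      (∏ i, gaussianPDFReal 0 (v i) (e i)).toNNReal :=
    (Finset.measurable_prod _ fun i _ =>
      (measurable_gaussianPDFReal 0 (v i)).comp (measurable_pi_apply i)).real_toNNReal
  calc ∫ ω, c' (J ω) * h (x (J ω) + ε ω) ∂P
      = ∫ p, c' p.1 * h (x p.1 + p.2) ∂(Measure.map (fun ω => (J ω, ε ω)) P) :=
        (integral_map (hJ.prodMk hε).aemeasurable hF.aestronglyMeasurable).symm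
    _ = ∫ p, c' p.1 * h (x p.1 + p.2) ∂((Measure.map J P).prod (Measure.map ε P)) := by
        rw [hJε]
    _ = ∫ j, (∫ e, c' j * h (x j + e) ∂(Measure.map ε P)) ∂(Measure.map J P) :=
        integral_prod _ hFint
    _ = ∑ j, ((Measure.map J P) {j}).toReal • ∫ e, c' j * h (x j + e) ∂(Measure.map ε P) :=
        integral_fintype Integrable.of_finite
    _ = ∑ j, ((Measure.map J P) {j}).toReal *
          (c' j * ∫ s, h s * ∏ i, gaussianPDFReal 0 (v i) (s i - x j i)) := by
        refine Finset.sum_congr rfl fun j _ => ?_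
        rw [smul_eq_mul]
        congr 1
        rw [hmapε, pi_gauss_withDensity v hv]
        have hof : (fun e : Fin m → ℝ =>
            ENNReal.ofReal (∏ i, gaussianPDFReal 0 (v i) (e i)))
            = fun e : Fin m → ℝ => ((∏ i, gaussianPDFReal 0 (v i) (e i)).toNNReal : ℝ≥0∞) := rfl
        rw [hof, integral_withDensity_eq_integral_smul hprod_meas]
        have h2 : (fun e : Fin m → ℝ =>
              (∏ i, gaussianPDFReal 0 (v i) (e i)).toNNReal • (c' j * h (x j + e)))
            = fun e => (fun s => (∏ i, gaussianPDFReal 0 (v i) (s i - x j i))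
                * (c' j * h s)) (x j + e) := by
          funext e
          have hnn : (0:ℝ) ≤ ∏ i, gaussianPDFReal 0 (v i) (e i) :=
            Finset.prod_nonneg fun i _ => gaussianPDFReal_nonneg _ _ _
          simp only [NNReal.smul_def, Real.coe_toNNReal _ hnn, smul_eq_mul, Pi.add_apply,
            add_sub_cancel_left]
        rw [h2, integral_add_left_eq_self
          (fun s => (∏ i, gaussianPDFReal 0 (v i) (s i - x j i)) * (c' j * h s)) (x j)]
        rw [show (fun s : Fin m → ℝ => (∏ i, gaussianPDFReal 0 (v i) (s i - x j i))
            * (c' j * h s))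
          = fun s => c' j * (h s * ∏ i, gaussianPDFReal 0 (v i) (s i - x j i)) from
          funext fun s => by ring, integral_const_mul]

/-- kernel form equivalence, Theorem 2: with `J` uniform on
`{1, …, n}`, `ε` independent Gaussian noise independent of `J`, and
`S = x_J + ε`, for any `c : {1, …, n} → ℝ` we have
`E[c(J) | σ(S)] = Σⱼ w_j(S, α) c(j)` a.s., and consequently
`E[(E[c(J) | σ(S)])²] = E[(Σⱼ w_j(S, α) c(j))²]`. -/
theorem kernel_form_equivalence
    {Ω : Type*} [MeasurableSpace Ω] {P : Measure Ω} [IsProbabilityMeasure P]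
    {m n : ℕ} (hm : 0 < m) (hn : 0 < n)
    (x : Fin n → Fin m → ℝ) (α : Fin m → ℝ) (hα : ∀ i, 0 < α i)
    (J : Ω → Fin n) (hJ : Measurable J)
    (hunif : ∀ j, P (J ⁻¹' {j}) = 1 / n)
    (ε : Ω → Fin m → ℝ) (hε : Measurable ε)
    (hindep : IndepFun ε J P)
    (hcomp : iIndepFun (fun i ω => ε ω i) P)
    (hgauss : ∀ i, Measure.map (fun ω => ε ω i) P = gaussianReal 0 ⟨α i, (hα i).le⟩)
    (S : Ω → Fin m → ℝ) (hS : S = fun ω => x (J ω) + ε ω)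
    (c : Fin n → ℝ) :
    (P[fun ω => c (J ω) | MeasurableSpace.comap S inferInstance]
        =ᵐ[P] fun ω => ∑ j, kernelWeight x j (S ω) α * c j)
    ∧ ∫ ω, ((P[fun ω' => c (J ω') | MeasurableSpace.comap S inferInstance]) ω) ^ 2 ∂P
        = ∫ ω, (∑ j, kernelWeight x j (S ω) α * c j) ^ 2 ∂P := by
  subst hS
  -- basic notation
  set v : Fin m → ℝ≥0 := fun i => ⟨α i, (hα i).le⟩ with hv_def
  have hcoe : ∀ i, ((v i : ℝ≥0) : ℝ) = α i := fun i => rfl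
  have hv0 : ∀ i, v i ≠ 0 := by
    intro i h0
    exact (hα i).ne' (by simpa [← hcoe i, h0] using rfl)
  set E : Fin n → (Fin m → ℝ) → ℝ :=
    fun j s => Real.exp (-(1 / 2) * ∑ i, (x j i - s i) ^ 2 / α i) with hE_def
  have hkw : ∀ j s, kernelWeight x j s α = E j s / ∑ k, E k s := fun j s => rfl
  set ψ : Fin n → (Fin m → ℝ) → ℝ :=
    fun j s => ∏ i, gaussianPDFReal 0 (v i) (s i - x j i) with hψ_def
  have hne : Nonempty (Fin n) := ⟨⟨0, hn⟩⟩
  have hEpos : ∀ j s, 0 < E j s := fun _ _ => Real.exp_pos _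
  have hDpos : ∀ s, 0 < ∑ k, E k s := fun s =>
    Finset.sum_pos (fun k _ => hEpos k s) Finset.univ_nonempty
  have hw0 : ∀ j s, 0 ≤ kernelWeight x j s α := fun j s => by
    rw [hkw]; exact div_nonneg (hEpos j s).le (hDpos s).le
  have hw1 : ∀ j s, kernelWeight x j s α ≤ 1 := fun j s => by
    rw [hkw]
    exact (div_le_one (hDpos s)).mpr
      (Finset.single_le_sum (fun k _ => (hEpos k s).le) (Finset.mem_univ j))
  -- measurability
  have hEmeas : ∀ j, Measurable (E j) := by
    intro j
    rw [hE_def]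
    exact ((Finset.measurable_sum _ fun i _ =>
      (by fun_prop : Measurable fun s : Fin m → ℝ => (x j i - s i) ^ 2 / α i)).const_mul
        _).exp
  have hkw_meas : ∀ j, Measurable fun s => kernelWeight x j s α := by
    intro j
    simp only [hkw]
    exact (hEmeas j).div (Finset.measurable_sum _ fun k _ => hEmeas k)
  have hg0_meas : Measurable fun s : Fin m → ℝ => ∑ j, kernelWeight x j s α * c j :=
    Finset.measurable_sum _ fun j _ => (hkw_meas j).mul_const (c j)
  have hψ_nonneg : ∀ j s, 0 ≤ ψ j s := fun j s =>
    Finset.prod_nonneg fun i _ => gaussianPDFReal_nonneg _ _ _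
  have hψ_int : ∀ j, Integrable (ψ j) (volume : Measure (Fin m → ℝ)) := by
    intro j
    rw [hψ_def]
    refine Integrable.fintype_prod (f := fun i t => gaussianPDFReal 0 (v i) (t - x j i)) ?_
    intro i
    simp only [gaussianPDFReal_sub]
    exact integrable_gaussianPDFReal _ _
  -- the density identity
  have hψE : ∀ j s, ψ j s = (∏ i, (Real.sqrt (2 * Real.pi * α i))⁻¹) * E j s := by
    intro j s
    show (∏ i, gaussianPDFReal 0 (v i) (s i - x j i))
        = (∏ i, (Real.sqrt (2 * Real.pi * α i))⁻¹)
          * Real.exp (-(1 / 2) * ∑ i, (x j i - s i) ^ 2 / α i)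
    have hsum : -(1 / 2 : ℝ) * ∑ i, (x j i - s i) ^ 2 / α i
        = ∑ i, -(s i - x j i) ^ 2 / (2 * α i) := by
      rw [Finset.mul_sum]
      refine Finset.sum_congr rfl fun i _ => ?_
      have hαi : α i ≠ 0 := (hα i).ne'
      field_simp
      ring
    simp only [gaussianPDFReal, sub_zero, hcoe]
    rw [Finset.prod_mul_distrib, ← Real.exp_sum, hsum]
  -- the pointwise kernel identity
  have claim : ∀ s, (∑ j, kernelWeight x j s α * c j) * (∑ j, ψ j s) = ∑ j, c j * ψ j s := by
    intro s
    have hD : (∑ k, E k s) ≠ 0 := (hDpos s).ne'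
    simp only [hkw, hψE]
    rw [← Finset.mul_sum, Finset.sum_mul]
    refine Finset.sum_congr rfl fun j _ => ?_
    field_simp
  -- bound for the candidate
  have hg0_bound : ∀ s : Fin m → ℝ, |∑ j, kernelWeight x j s α * c j| ≤ ∑ j, |c j| := by
    intro s
    refine (Finset.abs_sum_le_sum_abs _ _).trans (Finset.sum_le_sum fun j _ => ?_)
    rw [abs_mul]
    calc |kernelWeight x j s α| * |c j| ≤ 1 * |c j| := by
          refine mul_le_mul_of_nonneg_right ?_ (abs_nonneg _)
          rw [abs_of_nonneg (hw0 j s)]; exact hw1 j s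
      _ = |c j| := one_mul _
  -- measurable map S
  have hSm : Measurable (fun ω => x (J ω) + ε ω) := ((measurable_of_countable x).comp hJ).add hε
  have hcomap_le : MeasurableSpace.comap (fun ω => x (J ω) + ε ω) inferInstance ≤
      (inferInstance : MeasurableSpace Ω) := measurable_iff_comap_le.mp hSm
  -- law of ε
  have hmapε : Measure.map ε P = Measure.pi (fun i => gaussianReal 0 (v i)) := by
    refine (Measure.pi_eq fun s hs => ?_).symm
    rw [Measure.map_apply hε (MeasurableSet.univ_pi hs)]
    have hpre : ε ⁻¹' Set.univ.pi s = ⋂ i, (fun ω => ε ω i) ⁻¹' s i := by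
      ext ω; simp [Set.mem_pi]
    rw [hpre, hcomp.meas_iInter (fun i => ⟨s i, hs i, rfl⟩)]
    refine Finset.prod_congr rfl fun i _ => ?_
    rw [← hgauss i]
    exact (Measure.map_apply (show Measurable fun ω => ε ω i from
      (measurable_pi_apply i).comp hε) (hs i)).symm
  -- integrability of the two integrands
  have hint_cJ : Integrable (fun ω => c (J ω)) P := by
    refine Integrable.mono' (integrable_const (∑ j, |c j|))
      ((measurable_of_countable c).comp hJ).aestronglyMeasurable (ae_of_all _ fun ω => ?_)
    rw [Real.norm_eq_abs]
    exact Finset.single_le_sum (fun j _ => abs_nonneg (c j)) (Finset.mem_univ (J ω))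
  have hint_g : Integrable (fun ω => ∑ j, kernelWeight x j (x (J ω) + ε ω) α * c j) P := by
    refine Integrable.mono' (integrable_const (∑ j, |c j|))
      (hg0_meas.comp hSm).aestronglyMeasurable (ae_of_all _ fun ω => ?_)
    rw [Real.norm_eq_abs]
    exact hg0_bound _
  -- value of the uniform weights
  have ha : ∀ j, ((Measure.map J P) {j}).toReal = ((1 : ℝ≥0∞) / n).toReal := fun j => by
    rw [Measure.map_apply hJ (measurableSet_singleton j), hunif j]
  -- the set-integral equality
  have heq : ∀ A, MeasurableSet[MeasurableSpace.comap (fun ω => x (J ω) + ε ω) inferInstance] A →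
      ∫ ω in A, (∑ j, kernelWeight x j (x (J ω) + ε ω) α * c j) ∂P
        = ∫ ω in A, c (J ω) ∂P := by
    intro A hA
    obtain ⟨B, hB, rfl⟩ := hA
    set a : ℝ := ((1 : ℝ≥0∞) / n).toReal with ha_def
    set ind : (Fin m → ℝ) → ℝ := fun s => B.indicator (fun _ => (1:ℝ)) s with hind_def
    have hind_meas : Measurable ind := measurable_const.indicator hB
    have hind_bd : ∀ s, |ind s| ≤ 1 := by
      intro s; rw [hind_def]; by_cases hs : s ∈ B <;> simp [Set.indicator, hs]
    have e1 : ∫ ω in (fun ω => x (J ω) + ε ω) ⁻¹' B, c (J ω) ∂P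
        = ∑ j, a * (c j * ∫ s, ind s * ψ j s) := by
      rw [← integral_indicator (hSm hB)]
      rw [show (Set.indicator ((fun ω => x (J ω) + ε ω) ⁻¹' B) fun ω => c (J ω))
          = fun ω => c (J ω) * ind (x (J ω) + ε ω) from funext fun ω => by
        by_cases hω : (x (J ω) + ε ω) ∈ B <;>
          simp [hind_def, Set.indicator, Set.mem_preimage, hω]]
      rw [key_integral x v hv0 J hJ ε hε hindep hmapε c ind hind_meas 1 hind_bd]
      refine Finset.sum_congr rfl fun j _ => ?_
      rw [ha j]
    have e2 : ∫ ω in (fun ω => x (J ω) + ε ω) ⁻¹' B,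
          (∑ j, kernelWeight x j (x (J ω) + ε ω) α * c j) ∂P
        = ∑ j, a * (1 * ∫ s, ((∑ k, kernelWeight x k s α * c k) * ind s) * ψ j s) := by
      rw [← integral_indicator (hSm hB)]
      rw [show (Set.indicator ((fun ω => x (J ω) + ε ω) ⁻¹' B)
            fun ω => ∑ j, kernelWeight x j (x (J ω) + ε ω) α * c j)
          = fun ω => (fun _ : Fin n => (1:ℝ)) (J ω) *
              ((fun s => (∑ k, kernelWeight x k s α * c k) * ind s) (x (J ω) + ε ω)) from
        funext fun ω => by
          by_cases hω : (x (J ω) + ε ω) ∈ B <;>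
            simp [hind_def, Set.indicator, Set.mem_preimage, hω]]
      rw [key_integral x v hv0 J hJ ε hε hindep hmapε (fun _ => 1)
        (fun s => (∑ k, kernelWeight x k s α * c k) * ind s)
        (hg0_meas.mul hind_meas) (∑ j, |c j|) (fun s => by
          rw [abs_mul]
          calc |∑ k, kernelWeight x k s α * c k| * |ind s|
              ≤ (∑ j, |c j|) * 1 := mul_le_mul (hg0_bound s) (hind_bd s) (abs_nonneg _)
                (Finset.sum_nonneg fun j _ => abs_nonneg _)
            _ = ∑ j, |c j| := mul_one _)]
      refine Finset.sum_congr rfl fun j _ => ?_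
      rw [ha j]
    rw [e1, e2]
    -- integrable pieces
    have hintL : ∀ j ∈ Finset.univ, Integrable
        (fun s => a * (((∑ k, kernelWeight x k s α * c k) * ind s) * ψ j s))
        (volume : Measure (Fin m → ℝ)) := by
      intro j _
      refine Integrable.const_mul ?_ a
      refine Integrable.bdd_mul (hψ_int j) (hg0_meas.mul hind_meas).aestronglyMeasurable
        (c := ∑ k, |c k|) (ae_of_all _ fun s => ?_)
      rw [Real.norm_eq_abs, abs_mul]
      calc |∑ k, kernelWeight x k s α * c k| * |ind s|
          ≤ (∑ k, |c k|) * 1 := mul_le_mul (hg0_bound s) (hind_bd s) (abs_nonneg _)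
            (Finset.sum_nonneg fun k _ => abs_nonneg _)
        _ = ∑ k, |c k| := mul_one _
    have hintR : ∀ j ∈ Finset.univ, Integrable
        (fun s => a * (c j * (ind s * ψ j s))) (volume : Measure (Fin m → ℝ)) := by
      intro j _
      refine Integrable.const_mul (Integrable.const_mul ?_ (c j)) a
      refine Integrable.bdd_mul (hψ_int j) hind_meas.aestronglyMeasurable (c := 1) (ae_of_all _ fun s => ?_)
      rw [Real.norm_eq_abs]; exact hind_bd s
    calc ∑ j, a * (1 * ∫ s, ((∑ k, kernelWeight x k s α * c k) * ind s) * ψ j s)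
        = ∑ j, ∫ s, a * (((∑ k, kernelWeight x k s α * c k) * ind s) * ψ j s) := by
          refine Finset.sum_congr rfl fun j _ => ?_
          rw [one_mul]
          exact (integral_const_mul a _).symm
      _ = ∫ s, ∑ j, a * (((∑ k, kernelWeight x k s α * c k) * ind s) * ψ j s) :=
          (integral_finset_sum _ hintL).symm
      _ = ∫ s, ∑ j, a * (c j * (ind s * ψ j s)) := by
          refine integral_congr_ae (ae_of_all _ fun s => ?_)
          show (∑ j, a * (((∑ k, kernelWeight x k s α * c k) * ind s) * ψ j s))
              = ∑ j, a * (c j * (ind s * ψ j s))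
          have h1 : ∑ j, a * (((∑ k, kernelWeight x k s α * c k) * ind s) * ψ j s)
              = (a * ((∑ k, kernelWeight x k s α * c k) * ind s)) * ∑ j, ψ j s := by
            rw [Finset.mul_sum]
            exact Finset.sum_congr rfl fun j _ => by ring
          have h2 : ∑ j, a * (c j * (ind s * ψ j s))
              = (a * ind s) * ∑ j, c j * ψ j s := by
            rw [Finset.mul_sum]
            exact Finset.sum_congr rfl fun j _ => by ring
          rw [h1, h2, ← claim s]
          ring
      _ = ∑ j, ∫ s, a * (c j * (ind s * ψ j s)) := integral_finset_sum _ hintR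
      _ = ∑ j, a * (c j * ∫ s, ind s * ψ j s) := by
          refine Finset.sum_congr rfl fun j _ => ?_
          rw [← integral_const_mul, ← integral_const_mul]
  -- conditional expectation characterization
  have hgm : AEStronglyMeasurable[
      (MeasurableSpace.comap (fun ω => x (J ω) + ε ω) inferInstance)]
      (fun ω => ∑ j, kernelWeight x j (x (J ω) + ε ω) α * c j) P := by
    have : Measurable[MeasurableSpace.comap (fun ω => x (J ω) + ε ω) inferInstance]
        (fun ω => ∑ j, kernelWeight x j (x (J ω) + ε ω) α * c j) :=
      hg0_meas.comp (measurable_iff_comap_le.mpr le_rfl)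
    exact this.stronglyMeasurable.aestronglyMeasurable
  have hmain := ae_eq_condExp_of_forall_setIntegral_eq hcomap_le hint_cJ
    (fun A _ _ => hint_g.integrableOn) (fun A hA _ => heq A hA) hgm
  refine ⟨hmain.symm, ?_⟩
  exact integral_congr_ae (hmain.symm.mono fun ω hω => by
    simpa using congrArg (fun t : ℝ => t ^ 2) hω)
end

section
/- Let m, n be positive integers, x_1, …, x_n ∈ ℝ^m, and α ∈ ℝ^m with α_i > 0 for all i. On a probability space (Ω, 𝒜, P), let J : Ω → {1, …, n} be uniformly distributed, let ε : Ω → ℝ^m be independent of J with independent components ε_i ~ N(0, α_i), and set S = x_J + ε. Define for s ∈ ℝ^m the kernel weights w_j(s, α) = exp(−½ Σ_{i=1}^m (x_{j,i} − s_i)²/α_i) / Σ_{k=1}^n exp(−½ Σ_{i=1}^m (x_{k,i} − s_i)²/α_i). Then for each j ∈ {1, …, n}, the conditional probability satisfies E[1_{J=j} | σ(S)] = w_j(S, α) almost surely. -/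
open MeasureTheory ProbabilityTheory Real
open scoped NNReal ENNReal

lemma pw_prod_gaussianPDFReal {m : ℕ} (α : Fin m → ℝ) (hα : ∀ i, 0 < α i)
    (c t : Fin m → ℝ) :
    ∏ i, gaussianPDFReal 0 ⟨α i, (hα i).le⟩ (t i - c i)
      = (∏ i, (Real.sqrt (2 * Real.pi * α i))⁻¹)
          * Real.exp (-(1/2) * ∑ i, (c i - t i)^2 / α i) := by
  simp only [gaussianPDFReal]
  rw [Finset.prod_mul_distrib, ← Real.exp_sum, Finset.mul_sum]
  congr 1
  rw [Real.exp_eq_exp]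
  refine Finset.sum_congr rfl fun i _ => ?_
  have h2 : (t i - c i - 0) ^ 2 = (c i - t i) ^ 2 := by ring
  rw [h2]
  field_simp
  rfl

lemma pi_gaussian_withDensity {m : ℕ} (α : Fin m → ℝ) (hα : ∀ i, 0 < α i) :
    Measure.pi (fun i => gaussianReal 0 ⟨α i, (hα i).le⟩)
      = (volume : Measure (Fin m → ℝ)).withDensity
          (fun t => ENNReal.ofReal (∏ i, gaussianPDFReal 0 ⟨α i, (hα i).le⟩ (t i))) := by
  have hv : ∀ i, (⟨α i, (hα i).le⟩ : NNReal) ≠ 0 := by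
    intro i h
    exact (hα i).ne' (congrArg NNReal.toReal h)
  haveI : ∀ i, SigmaFinite (gaussianReal 0 ⟨α i, (hα i).le⟩) := fun i => by
    haveI := instIsProbabilityMeasureGaussianReal 0 ⟨α i, (hα i).le⟩; infer_instance
  refine Measure.pi_eq fun s hs => ?_
  rw [withDensity_apply _ (MeasurableSet.univ_pi hs),
    ← lintegral_indicator (MeasurableSet.univ_pi hs)]
  have h1 : (Set.univ.pi s).indicator
      (fun t => ENNReal.ofReal (∏ i, gaussianPDFReal 0 ⟨α i, (hα i).le⟩ (t i)))
      = fun t => ENNReal.ofReal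
          (∏ i, (s i).indicator (gaussianPDFReal 0 ⟨α i, (hα i).le⟩) (t i)) := by
    funext t
    by_cases ht : t ∈ Set.univ.pi s
    · rw [Set.indicator_of_mem ht]
      congr 1
      refine Finset.prod_congr rfl fun i _ => ?_
      rw [Set.indicator_of_mem (ht i (Set.mem_univ i))]
    · rw [Set.indicator_of_notMem ht]
      rw [Set.mem_univ_pi] at ht
      push_neg at ht
      obtain ⟨i, hi⟩ := ht
      rw [Finset.prod_eq_zero (Finset.mem_univ i) (Set.indicator_of_notMem hi _)]
      simp
  rw [h1]
  have hint : ∀ i, Integrable ((s i).indicator (gaussianPDFReal 0 ⟨α i, (hα i).le⟩)) :=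
    fun i => (integrable_gaussianPDFReal _ _).indicator (hs i)
  have hG_int : Integrable
      (fun t : Fin m → ℝ => ∏ i, (s i).indicator (gaussianPDFReal 0 ⟨α i, (hα i).le⟩) (t i)) :=
    Integrable.fintype_prod hint
  rw [← ofReal_integral_eq_lintegral_ofReal hG_int]
  · rw [MeasureTheory.integral_fintype_prod_volume_eq_prod (𝕜 := ℝ)
      (fun i => (s i).indicator (gaussianPDFReal 0 ⟨α i, (hα i).le⟩)),
      ENNReal.ofReal_prod_of_nonneg]
    · refine Finset.prod_congr rfl fun i _ => ?_
      rw [gaussianReal_apply_eq_integral 0 (hv i) (s i), ← integral_indicator (hs i)]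
    · intro i _
      exact integral_nonneg fun y => Set.indicator_nonneg
        (fun z _ => gaussianPDFReal_nonneg _ _ _) _
  · exact ae_of_all _ fun t => Finset.prod_nonneg fun i _ =>
      Set.indicator_nonneg (fun z _ => gaussianPDFReal_nonneg _ _ _) _

lemma map_eq_pi_gaussian {Ω : Type*} [MeasurableSpace Ω] {P : Measure Ω}
    [IsProbabilityMeasure P] {m : ℕ}
    (α : Fin m → ℝ) (hα : ∀ i, 0 < α i) (ε : Ω → Fin m → ℝ) (hε : Measurable ε)
    (hcomp : iIndepFun (fun i ω => ε ω i) P)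
    (hgauss : ∀ i, Measure.map (fun ω => ε ω i) P = gaussianReal 0 ⟨α i, (hα i).le⟩) :
    Measure.map ε P = Measure.pi fun i => gaussianReal 0 ⟨α i, (hα i).le⟩ := by
  haveI : ∀ i, SigmaFinite (gaussianReal 0 ⟨α i, (hα i).le⟩) := fun i => by
    haveI := instIsProbabilityMeasureGaussianReal 0 ⟨α i, (hα i).le⟩; infer_instance
  refine (Measure.pi_eq fun s hs => ?_).symm
  rw [Measure.map_apply hε (MeasurableSet.univ_pi hs)]
  have hpre : ε ⁻¹' Set.univ.pi s = ⋂ i, (fun ω => ε ω i) ⁻¹' s i := by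
    ext ω; simp [Set.mem_pi]
  rw [hpre, hcomp.meas_iInter fun i => ⟨s i, hs i, rfl⟩]
  refine Finset.prod_congr rfl fun i _ => ?_
  rw [← hgauss i, Measure.map_apply (show Measurable fun ω => ε ω i from
    (measurable_pi_apply i).comp hε) (hs i)]


set_option maxHeartbeats 2000000

/-- Bayes-rule computation underlying Theorem 2: with `J`
uniform on `{1, …, n}`, `ε` independent Gaussian noise independent of `J`, and
`S = x_J + ε`, the posterior probability of each sample point given the noised
observation is the normalized Gaussian kernel weight:
`E[1_{J=j} | σ(S)] = w_j(S, α)` a.s. for each `j`. -/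
theorem posterior_is_kernel_weight
    {Ω : Type*} [MeasurableSpace Ω] {P : Measure Ω} [IsProbabilityMeasure P]
    {m n : ℕ} (hm : 0 < m) (hn : 0 < n)
    (x : Fin n → Fin m → ℝ) (α : Fin m → ℝ) (hα : ∀ i, 0 < α i)
    (J : Ω → Fin n) (hJ : Measurable J)
    (hunif : ∀ j, P (J ⁻¹' {j}) = 1 / n)
    (ε : Ω → Fin m → ℝ) (hε : Measurable ε)
    (hindep : IndepFun ε J P)
    (hcomp : iIndepFun (fun i ω => ε ω i) P)
    (hgauss : ∀ i, Measure.map (fun ω => ε ω i) P = gaussianReal 0 ⟨α i, (hα i).le⟩)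
    (S : Ω → Fin m → ℝ) (hS : S = fun ω => x (J ω) + ε ω)
    (j : Fin n) :
    P[Set.indicator {ω | J ω = j} (fun _ => (1 : ℝ))
        | MeasurableSpace.comap S inferInstance]
      =ᵐ[P] fun ω => kernelWeight x j (S ω) α := by
  classical
  -- basic measurability
  have hxJ : Measurable fun ω => x (J ω) := (measurable_of_countable x).comp hJ
  have hmS : Measurable S := by rw [hS]; exact hxJ.add hε
  -- the weight function W
  set W : (Fin m → ℝ) → ℝ := fun s => kernelWeight x j s α with hWdef
  have hnum_cont : ∀ k : Fin n, Continuous fun s : Fin m → ℝ =>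
      Real.exp (-(1 / 2 : ℝ) * ∑ i, (x k i - s i) ^ 2 / α i) := by
    intro k
    exact Real.continuous_exp.comp (continuous_const.mul (continuous_finset_sum _ fun i _ =>
      ((continuous_const.sub (continuous_apply i)).pow 2).div_const _))
  have hden_pos : ∀ s : Fin m → ℝ,
      0 < ∑ k, Real.exp (-(1 / 2 : ℝ) * ∑ i, (x k i - s i) ^ 2 / α i) := fun s =>
    Finset.sum_pos (fun k _ => Real.exp_pos _) ⟨j, Finset.mem_univ j⟩
  have hW_cont : Continuous W := by
    rw [hWdef]
    unfold kernelWeight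
    exact (hnum_cont j).div (continuous_finset_sum _ fun k _ => hnum_cont k)
      fun s => (hden_pos s).ne'
  have hW_meas : Measurable W := hW_cont.measurable
  have hW_nonneg : ∀ s, 0 ≤ W s := fun s =>
    div_nonneg (Real.exp_pos _).le (hden_pos s).le
  have hW_le_one : ∀ s, W s ≤ 1 := fun s =>
    div_le_one_of_le₀ (Finset.single_le_sum
      (f := fun k => Real.exp (-(1 / 2 : ℝ) * ∑ i, (x k i - s i) ^ 2 / α i))
      (fun k _ => (Real.exp_pos _).le) (Finset.mem_univ j)) (hden_pos s).le
  -- the density D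
  set D : (Fin m → ℝ) → ℝ := fun t => ∏ i, gaussianPDFReal 0 ⟨α i, (hα i).le⟩ (t i) with hDdef
  have hD_meas : Measurable D := Finset.measurable_prod _ fun i _ =>
    (measurable_gaussianPDFReal _ _).comp (measurable_pi_apply i)
  have hD_nonneg : ∀ t, 0 ≤ D t := fun t =>
    Finset.prod_nonneg fun i _ => gaussianPDFReal_nonneg _ _ _
  have hD_int : Integrable D :=
    Integrable.fintype_prod fun i => integrable_gaussianPDFReal 0 ⟨α i, (hα i).le⟩
  have hD_le : ∀ t, ∀ c : Fin m → ℝ, |D (t - c)| = D (t - c) := fun t c =>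
    abs_of_nonneg (hD_nonneg _)
  -- law of ε as a density measure
  have hmap : Measure.map ε P
      = (volume : Measure (Fin m → ℝ)).withDensity fun t => ENNReal.ofReal (D t) := by
    rw [map_eq_pi_gaussian α hα ε hε hcomp hgauss, pi_gaussian_withDensity α hα]
  -- integration against the law of ε
  have key : ∀ g : (Fin m → ℝ) → ℝ, Measurable g →
      ∫ ω, g (ε ω) ∂P = ∫ t, D t * g t := by
    intro g hg
    rw [← integral_map hε.aemeasurable hg.aestronglyMeasurable, hmap]
    have hof : (fun t => ENNReal.ofReal (D t))
        = fun t => (((fun t => (D t).toNNReal) t : ℝ≥0) : ℝ≥0∞) := rfl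
    rw [hof, integral_withDensity_eq_integral_smul hD_meas.real_toNNReal g]
    congr 1
    funext t
    rw [NNReal.smul_def, Real.coe_toNNReal _ (hD_nonneg t)]
    rw [smul_eq_mul]
  -- translation invariance
  have hshift : ∀ (F : (Fin m → ℝ) → ℝ) (c : Fin m → ℝ),
      (∫ e, F (c + e)) = ∫ t, F t := by
    intro F c
    exact integral_add_left_eq_self F c
  -- the shifted density formula
  have hDsub : ∀ c t : Fin m → ℝ, D (t - c)
      = (∏ i, (Real.sqrt (2 * Real.pi * α i))⁻¹)
          * Real.exp (-(1 / 2 : ℝ) * ∑ i, (c i - t i) ^ 2 / α i) := by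
    intro c t
    exact pw_prod_gaussianPDFReal α hα c t
  -- the key pointwise identity
  have hkey_pt : ∀ t, (∑ k, W t * D (t - x k)) = D (t - x j) := by
    intro t
    have hne := (hden_pos t).ne'
    simp_rw [hDsub]
    rw [← Finset.mul_sum, ← Finset.mul_sum]
    simp only [hWdef]
    unfold kernelWeight
    generalize hA : Real.exp (-(1 / 2 : ℝ) * ∑ i, (x j i - t i) ^ 2 / α i) = A
    generalize hC : (∏ i, (Real.sqrt (2 * Real.pi * α i))⁻¹) = C
    generalize hSd : (∑ k, Real.exp (-(1 / 2 : ℝ) * ∑ i, (x k i - t i) ^ 2 / α i)) = Sd at hne ⊢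
    field_simp

  -- invariance instances for the pi volume
  haveI hinvL : Measure.IsAddLeftInvariant (volume : Measure (Fin m → ℝ)) :=
    inferInstanceAs (Measure.IsAddLeftInvariant (Measure.pi fun _ : Fin m => (volume : Measure ℝ)))
  haveI hinvR : Measure.IsAddRightInvariant (volume : Measure (Fin m → ℝ)) :=
    inferInstanceAs (Measure.IsAddRightInvariant (Measure.pi fun _ : Fin m => (volume : Measure ℝ)))
  -- apply the characterization of the conditional expectation
  have hle : MeasurableSpace.comap S inferInstance ≤ ‹MeasurableSpace Ω› := hmS.comap_le
  have hf_int : Integrable (Set.indicator {ω | J ω = j} fun _ => (1 : ℝ)) P :=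
    (integrable_const _).indicator (hJ (measurableSet_singleton j))
  have hWS_int : Integrable (fun ω => W (S ω)) P := by
    refine Integrable.mono' (integrable_const (1 : ℝ))
      ((hW_meas.comp hmS).aestronglyMeasurable) (ae_of_all _ fun ω => ?_)
    rw [Real.norm_eq_abs, abs_of_nonneg (hW_nonneg _)]
    exact hW_le_one _
  refine (ae_eq_condExp_of_forall_setIntegral_eq hle hf_int
    (fun s _ _ => hWS_int.integrableOn) ?_ ?_).symm
  · -- the set integral equality
    rintro s ⟨B, hB, rfl⟩ _
    set f₁ : (Fin m → ℝ) → ℝ := B.indicator fun _ => 1 with hf₁def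
    have hf₁_meas : Measurable f₁ := measurable_const.indicator hB
    have hf₁_nonneg : ∀ t, 0 ≤ f₁ t := fun t =>
      Set.indicator_nonneg (fun _ _ => zero_le_one) t
    have hf₁_le : ∀ t, f₁ t ≤ 1 := by
      intro t
      by_cases h : t ∈ B <;> simp [hf₁def, h]
    set ik : Fin n → Fin n → ℝ := fun k => ({k} : Set (Fin n)).indicator fun _ => 1 with hikdef
    have hik_meas : ∀ k, Measurable (ik k) := fun k => measurable_of_countable _
    set Hk : Fin n → (Fin m → ℝ) → ℝ := fun k e => f₁ (x k + e) * W (x k + e) with hHkdef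
    have hshift_meas : ∀ c : Fin m → ℝ, Measurable fun e : Fin m → ℝ => c + e :=
      fun c => measurable_const.add measurable_id
    have hHk_meas : ∀ k, Measurable (Hk k) := fun k =>
      (hf₁_meas.comp (hshift_meas (x k))).mul (hW_meas.comp (hshift_meas (x k)))
    have hHk_nonneg : ∀ k e, 0 ≤ Hk k e := fun k e =>
      mul_nonneg (hf₁_nonneg _) (hW_nonneg _)
    have hHk_le : ∀ k e, Hk k e ≤ 1 := fun k e =>
      mul_le_one₀ (hf₁_le _) (hW_nonneg _) (hW_le_one _)
    have hik_eq : ∀ k, (fun ω => ik k (J ω)) = (J ⁻¹' {k}).indicator fun _ => (1 : ℝ) := by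
      intro k
      funext ω
      by_cases h : J ω = k <;> simp [hikdef, h]
    have hik_int : ∀ k, Integrable (fun ω => ik k (J ω)) P := by
      intro k
      rw [hik_eq k]
      exact (integrable_const _).indicator (hJ (measurableSet_singleton k))
    have hJint : ∀ k, ∫ ω, ik k (J ω) ∂P = ((1 : ℝ≥0∞) / n).toReal := by
      intro k
      rw [hik_eq k, integral_indicator_const (1 : ℝ) (hJ (measurableSet_singleton k)),
        smul_eq_mul, mul_one, measureReal_def, hunif k]
    have hHkε_int : ∀ k, Integrable (fun ω => Hk k (ε ω)) P := by
      intro k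
      refine Integrable.mono' (integrable_const (1 : ℝ))
        (((hHk_meas k).comp hε).aestronglyMeasurable) (ae_of_all _ fun ω => ?_)
      rw [Real.norm_eq_abs, abs_of_nonneg (hHk_nonneg _ _)]
      exact hHk_le _ _
    have hfac : ∀ k, ∫ ω, Hk k (ε ω) * ik k (J ω) ∂P
        = (∫ ω, Hk k (ε ω) ∂P) * ∫ ω, ik k (J ω) ∂P := by
      intro k
      exact (hindep.comp (hHk_meas k) (hik_meas k)).integral_mul_eq_mul_integral
        (hHkε_int k).aestronglyMeasurable (hik_int k).aestronglyMeasurable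
    have hεint : ∀ k, ∫ ω, Hk k (ε ω) ∂P = ∫ t, f₁ t * W t * D (t - x k) := by
      intro k
      rw [key (Hk k) (hHk_meas k)]
      have heq : (fun e => D e * Hk k e)
          = fun e => (fun t => f₁ t * W t * D (t - x k)) (x k + e) := by
        funext e
        simp only [hHkdef]
        rw [add_sub_cancel_left]
        ring
      rw [heq, hshift (fun t => f₁ t * W t * D (t - x k)) (x k)]
    have hterm_int : ∀ k : Fin n, Integrable (fun t => f₁ t * W t * D (t - x k)) := by
      intro k
      have hDk_int : Integrable fun t : Fin m → ℝ => D (t - x k) :=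
        hD_int.comp_sub_right (x k)
      refine hDk_int.mono' (((hf₁_meas.mul hW_meas).mul
        (hD_meas.comp (measurable_id.sub measurable_const))).aestronglyMeasurable)
        (ae_of_all _ fun t => ?_)
      rw [Real.norm_eq_abs, abs_of_nonneg
        (mul_nonneg (mul_nonneg (hf₁_nonneg t) (hW_nonneg t)) (hD_nonneg _))]
      calc f₁ t * W t * D (t - x k) ≤ 1 * D (t - x k) :=
            mul_le_mul_of_nonneg_right
              (mul_le_one₀ (hf₁_le t) (hW_nonneg t) (hW_le_one t)) (hD_nonneg _)
        _ = D (t - x k) := one_mul _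
    -- left hand side
    have hLpt : (S ⁻¹' B).indicator (fun ω => W (S ω))
        = fun ω => ∑ k, Hk k (ε ω) * ik k (J ω) := by
      funext ω
      have hSω : S ω = x (J ω) + ε ω := by rw [hS]
      rw [Finset.sum_eq_single (J ω)
        (fun k _ hk => by simp [hikdef, Set.indicator_of_notMem, Ne.symm hk])
        (fun h => absurd (Finset.mem_univ _) h)]
      have hik1 : ik (J ω) (J ω) = 1 := by simp [hikdef]
      rw [hik1, mul_one]
      simp only [hHkdef, ← hSω]
      by_cases hmem : S ω ∈ B
      · rw [Set.indicator_of_mem (show ω ∈ S ⁻¹' B from hmem)]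
        have : f₁ (S ω) = 1 := by simp [hf₁def, hmem]
        rw [this, one_mul]
      · rw [Set.indicator_of_notMem (show ω ∉ S ⁻¹' B from hmem)]
        have : f₁ (S ω) = 0 := by simp [hf₁def, hmem]
        rw [this, zero_mul]
    have hprod_int : ∀ k, Integrable (fun ω => Hk k (ε ω) * ik k (J ω)) P := by
      intro k
      refine Integrable.mono' (integrable_const (1 : ℝ))
        ((((hHk_meas k).comp hε).mul ((hik_meas k).comp hJ)).aestronglyMeasurable)
        (ae_of_all _ fun ω => ?_)
      have hik_nonneg : 0 ≤ ik k (J ω) := Set.indicator_nonneg (fun _ _ => zero_le_one) _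
      have hik_le : ik k (J ω) ≤ 1 := by
        by_cases h : J ω = k <;> simp [hikdef, h]
      rw [Real.norm_eq_abs, abs_mul, abs_of_nonneg (hHk_nonneg _ _), abs_of_nonneg hik_nonneg]
      calc Hk k (ε ω) * ik k (J ω) ≤ 1 * 1 :=
            mul_le_mul (hHk_le _ _) hik_le hik_nonneg zero_le_one
        _ = 1 := mul_one 1
    have hLHS : ∫ ω in S ⁻¹' B, W (S ω) ∂P
        = (∫ t, f₁ t * D (t - x j)) * ((1 : ℝ≥0∞) / n).toReal := by
      rw [← integral_indicator (hmS hB), hLpt,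
        integral_finset_sum _ (fun k _ => hprod_int k)]
      simp_rw [hfac, hεint, hJint]
      rw [← Finset.sum_mul]
      congr 1
      rw [← integral_finset_sum _ (fun k _ => hterm_int k)]
      congr 1
      funext t
      calc ∑ k, f₁ t * W t * D (t - x k) = f₁ t * ∑ k, W t * D (t - x k) := by
            rw [Finset.mul_sum]
            exact Finset.sum_congr rfl fun k _ => by ring
        _ = f₁ t * D (t - x j) := by rw [hkey_pt t]
    -- right hand side
    have hRpt : (S ⁻¹' B).indicator (Set.indicator {ω | J ω = j} fun _ => (1 : ℝ))
        = fun ω => (fun e => f₁ (x j + e)) (ε ω) * ik j (J ω) := by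
      funext ω
      have hSω : S ω = x (J ω) + ε ω := by rw [hS]
      by_cases hj : J ω = j
      · have hx : x j + ε ω = S ω := by rw [hSω, hj]
        have hikj : ik j (J ω) = 1 := by simp [hikdef, hj]
        simp only [hikj, mul_one, hx]
        by_cases hmem : S ω ∈ B
        · rw [Set.indicator_of_mem (show ω ∈ S ⁻¹' B from hmem)]
          have h1 : f₁ (S ω) = 1 := by simp [hf₁def, hmem]
          have h2 : Set.indicator {ω | J ω = j} (fun _ => (1 : ℝ)) ω = 1 := by
            simp [Set.indicator_apply, hj]
          rw [h1, h2]
        · rw [Set.indicator_of_notMem (show ω ∉ S ⁻¹' B from hmem)]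
          have h1 : f₁ (S ω) = 0 := by simp [hf₁def, hmem]
          rw [h1]
      · have hikj : ik j (J ω) = 0 := by simp [hikdef, hj]
        rw [hikj, mul_zero]
        have hin : Set.indicator {ω | J ω = j} (fun _ => (1 : ℝ)) ω = 0 := by
          simp [Set.indicator_apply, hj]
        by_cases hmem : ω ∈ S ⁻¹' B
        · rw [Set.indicator_of_mem hmem, hin]
        · rw [Set.indicator_of_notMem hmem]
    have hRf_meas : Measurable fun e : Fin m → ℝ => f₁ (x j + e) :=
      hf₁_meas.comp (hshift_meas (x j))
    have hRf_int : Integrable (fun ω => f₁ (x j + ε ω)) P := by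
      refine Integrable.mono' (integrable_const (1 : ℝ))
        ((hRf_meas.comp hε).aestronglyMeasurable) (ae_of_all _ fun ω => ?_)
      rw [Real.norm_eq_abs, abs_of_nonneg (hf₁_nonneg _)]
      exact hf₁_le _
    have hRHS : ∫ ω in S ⁻¹' B, Set.indicator {ω | J ω = j} (fun _ => (1 : ℝ)) ω ∂P
        = (∫ t, f₁ t * D (t - x j)) * ((1 : ℝ≥0∞) / n).toReal := by
      rw [← integral_indicator (hmS hB), hRpt]
      have hmul : ∫ ω, (fun e => f₁ (x j + e)) (ε ω) * ik j (J ω) ∂P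
          = (∫ ω, f₁ (x j + ε ω) ∂P) * ∫ ω, ik j (J ω) ∂P :=
        (hindep.comp hRf_meas (hik_meas j)).integral_mul_eq_mul_integral hRf_int.aestronglyMeasurable (hik_int j).aestronglyMeasurable
      rw [hmul, hJint j]
      congr 1
      rw [key _ hRf_meas]
      have heq : (fun t => D t * f₁ (x j + t))
          = fun e => (fun t => f₁ t * D (t - x j)) (x j + e) := by
        funext e
        simp only
        rw [add_sub_cancel_left]
        ring
      rw [heq, hshift (fun t => f₁ t * D (t - x j)) (x j)]
    show (∫ ω in S ⁻¹' B, W (S ω) ∂P)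
        = ∫ ω in S ⁻¹' B, Set.indicator {ω | J ω = j} (fun _ => (1 : ℝ)) ω ∂P
    rw [hLHS, hRHS]
  · -- measurability w.r.t. the comap σ-algebra
    refine (Measurable.stronglyMeasurable ?_).aestronglyMeasurable
    exact hW_meas.comp (Measurable.of_comap_le le_rfl)
end
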